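/- arXiv:1110.2213 — 9 statements merged into one kernel-verified Lean document; each statement's English description precedes it below -/
import Mathlib

section
/- Let G and H be unbounded labeled granularities such that ⊥ groups periodically into G with period length P_G and period label distance N_G, and G groups periodically into H with period length P_H^G and period label distance N_H^G. If P_H^G = α·N_G for some positive integer α, then ⊥ groups periodically into H with period length α·P_G and period label distance N_H^G. -/
/-- A labeled granularity over a linearly ordered time domain `T`:
a label set `labels ⊆ ℤ` and a map `gran` assigning to each label a granule
(a subset of `T`); granules are empty outside the label set, granules with
larger labels come later, and between two non-empty granules all granules
(with label in the label set) are non-empty. -/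
structure Granularity (T : Type*) [LinearOrder T] where
  labels : Set ℤ
  gran : ℤ → Set T
  empty_outside : ∀ i, i ∉ labels → gran i = ∅
  mono : ∀ i ∈ labels, ∀ j ∈ labels, i < j → (gran i).Nonempty → (gran j).Nonempty →
    ∀ x ∈ gran i, ∀ y ∈ gran j, x < y
  no_gaps : ∀ i ∈ labels, ∀ j ∈ labels, i < j → (gran i).Nonempty → (gran j).Nonempty →
    ∀ k ∈ labels, i < k → k < j → (gran k).Nonempty

variable {T : Type*} [LinearOrder T]

/-- `G` is full-integer labeled. -/
def FullInteger (G : Granularity T) : Prop := G.labels = Set.univ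

/-- `G` is unbounded: the label set has no least and no greatest element, and
no granule of `G` is empty. -/
def Unbounded (G : Granularity T) : Prop :=
  (∀ i ∈ G.labels, ∃ j ∈ G.labels, j < i) ∧
  (∀ i ∈ G.labels, ∃ j ∈ G.labels, i < j) ∧
  (∀ i ∈ G.labels, (G.gran i).Nonempty)

/-- `G` groups into `H`: every non-empty granule of `H` is a union of granules of `G`. -/
def GroupsInto (G H : Granularity T) : Prop :=
  ∀ j ∈ H.labels, (H.gran j).Nonempty →
    ∃ S ⊆ G.labels, H.gran j = ⋃ i ∈ S, G.gran i

/-- `G` groups periodically into `H` with period length `P` and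
period label distance `N`. -/
def GroupsPeriodicallyInto (G H : Granularity T) (P N : ℤ) : Prop :=
  GroupsInto G H ∧ 0 < P ∧ 0 < N ∧
  (∀ i ∈ H.labels, i + N ∈ H.labels ∨ ∃ g, IsGreatest H.labels g ∧ g < i + N) ∧
  (∀ i ∈ H.labels, ∀ k : ℕ, ∀ j : ℕ → ℤ,
    (∀ r ≤ k, j r ∈ G.labels) →
    H.gran i = ⋃ r ∈ Finset.range (k + 1), G.gran (j r) →
    i + N ∈ H.labels → (H.gran (i + N)).Nonempty →
    (∀ r ≤ k, j r + P ∈ G.labels) ∧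
      H.gran (i + N) = ⋃ r ∈ Finset.range (k + 1), G.gran (j r + P)) ∧
  (∀ s, IsLeast {i | i ∈ H.labels ∧ (H.gran i).Nonempty} s →
    s + N ∈ H.labels ∧ (H.gran (s + N)).Nonempty)

/-- `B` is a bottom granularity: full-integer labeled with all granules non-empty.
(That it groups into the granularities under consideration is stated separately.) -/
def IsBottom (B : Granularity T) : Prop :=
  B.labels = Set.univ ∧ ∀ i, (B.gran i).Nonempty

/-- `up(z)_G^H = z'`: `z'` is the unique label of `H` whose granule contains `G(z)`. -/
def UpDef (G H : Granularity T) (z z' : ℤ) : Prop :=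
  z ∈ G.labels ∧ z' ∈ H.labels ∧ G.gran z ⊆ H.gran z' ∧
  ∀ w ∈ H.labels, G.gran z ⊆ H.gran w → w = z'

/-- `l_G = lG`: `lG = up(i)_⊥^G` where `i` is the smallest positive integer for
which `up(i)_⊥^G` is defined (`B` plays the role of `⊥`). -/
def IsFirstLabel (B G : Granularity T) (lG : ℤ) : Prop :=
  ∃ i : ℤ, 0 < i ∧ UpDef B G i lG ∧
    ∀ i', 0 < i' → (∃ z', UpDef B G i' z') → i ≤ i'

/-- `L̂_G^P`: the set of labels `i ∈ L_G` such that `⊥(n) ⊆ G(i)` for some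
`n` with `1 ≤ n ≤ P` (`B` plays the role of `⊥`). -/
def LHat (B G : Granularity T) (P : ℤ) : Set ℤ :=
  {i | i ∈ G.labels ∧ ∃ n : ℤ, 1 ≤ n ∧ n ≤ P ∧ B.gran n ⊆ G.gran i}

/-- `G` is finer than `H`: every granule of `G` is contained in some granule of `H`. -/
def FinerThan (G H : Granularity T) : Prop :=
  ∀ i ∈ G.labels, ∃ j ∈ H.labels, G.gran i ⊆ H.gran j

/-- `G` partitions `H`. -/
def Partitions (G H : Granularity T) : Prop :=
  GroupsInto G H ∧ FinerThan G H

/-- `G₁` is a label-aligned subgranularity of `G₂`. -/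
def LabelAlignedSub (G₁ G₂ : Granularity T) : Prop :=
  G₁.labels ⊆ G₂.labels ∧ ∀ i ∈ G₁.labels, (G₁.gran i).Nonempty → G₁.gran i = G₂.gran i

/-- `Δ_k^l(S)`: the elements of the ordered set `S` occupying positions
`k, k+1, …, k+l−1`, positions counted (1-based) from the first element when
`k > 0` and (negatively, `-1`-based) from the last element backwards when `k < 0`. -/
def Delta (k l : ℤ) (S : Set ℤ) : Set ℤ :=
  {a ∈ S | ∃ p : ℤ,
    ((0 < k ∧ 1 ≤ p ∧ {x ∈ S | x ≤ a}.Finite ∧ ({x ∈ S | x ≤ a}.ncard : ℤ) = p) ∨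
     (k < 0 ∧ p ≤ -1 ∧ {x ∈ S | a ≤ x}.Finite ∧ ({x ∈ S | a ≤ x}.ncard : ℤ) = -p)) ∧
    k ≤ p ∧ p ≤ k + l - 1}

section Aux

lemma bot_label_eq {B : Granularity T} (hB : IsBottom B) {b b' : ℤ} {x : T}
    (h1 : x ∈ B.gran b) (h2 : x ∈ B.gran b') : b = b' := by
  by_contra hne
  rcases lt_or_gt_of_ne hne with h | h
  · exact absurd (B.mono b (by simp [hB.1]) b' (by simp [hB.1]) h (hB.2 b) (hB.2 b') x h1 x h2)
      (lt_irrefl x)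
  · exact absurd (B.mono b' (by simp [hB.1]) b (by simp [hB.1]) h (hB.2 b') (hB.2 b) x h2 x h1)
      (lt_irrefl x)

lemma gran_label_eq {G : Granularity T} (hGu : Unbounded G) {s s' : ℤ} {x : T}
    (hs : s ∈ G.labels) (hs' : s' ∈ G.labels)
    (h1 : x ∈ G.gran s) (h2 : x ∈ G.gran s') : s = s' := by
  by_contra hne
  rcases lt_or_gt_of_ne hne with h | h
  · exact absurd (G.mono s hs s' hs' h (hGu.2.2 s hs) (hGu.2.2 s' hs') x h1 x h2) (lt_irrefl x)
  · exact absurd (G.mono s' hs' s hs h (hGu.2.2 s' hs') (hGu.2.2 s hs) x h2 x h1) (lt_irrefl x)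

lemma exists_enum {D : Set ℤ} (hfin : D.Finite) (hne : D.Nonempty) :
    ∃ (k : ℕ) (g : ℕ → ℤ), (∀ r, g r ∈ D) ∧ ∀ b ∈ D, ∃ r ≤ k, g r = b := by
  obtain ⟨d, hd⟩ := hne
  refine ⟨hfin.toFinset.toList.length, fun r => hfin.toFinset.toList.getD r d, ?_, ?_⟩
  · intro r
    show hfin.toFinset.toList.getD r d ∈ D
    by_cases h : r < hfin.toFinset.toList.length
    · rw [List.getD_eq_getElem _ _ h]
      have hm : hfin.toFinset.toList[r] ∈ hfin.toFinset.toList := List.getElem_mem h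
      rw [Finset.mem_toList, Set.Finite.mem_toFinset] at hm
      exact hm
    · rw [List.getD_eq_default _ _ (not_lt.1 h)]
      exact hd
  · intro b hb
    have hb' : b ∈ hfin.toFinset.toList := by
      rw [Finset.mem_toList, Set.Finite.mem_toFinset]; exact hb
    obtain ⟨r, hr, hrb⟩ := List.mem_iff_getElem.1 hb'
    exact ⟨r, hr.le, by show hfin.toFinset.toList.getD r d = b
                        rw [List.getD_eq_getElem _ _ hr]; exact hrb⟩

lemma union_of_enum {D : Set ℤ} {k : ℕ} {g : ℕ → ℤ}
    (h1 : ∀ r, g r ∈ D) (h2 : ∀ b ∈ D, ∃ r ≤ k, g r = b) (F : ℤ → Set T) :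
    ⋃ b ∈ D, F b = ⋃ r ∈ Finset.range (k + 1), F (g r) := by
  ext x
  simp only [Set.mem_iUnion, Finset.mem_range, Nat.lt_succ_iff, exists_prop]
  constructor
  · rintro ⟨b, hb, hx⟩
    obtain ⟨r, hr, hrb⟩ := h2 b hb
    exact ⟨r, hr, by rw [hrb]; exact hx⟩
  · rintro ⟨r, _, hx⟩
    exact ⟨g r, h1 r, hx⟩

lemma no_greatest {G : Granularity T} (hGu : Unbounded G) : ¬ ∃ g, IsGreatest G.labels g := by
  rintro ⟨g, hg, hub⟩
  obtain ⟨j, hj, hgj⟩ := hGu.2.1 g hg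
  exact absurd (hub hj) (not_le.2 hgj)

lemma gran_eq_bUnion_bot {B G : Granularity T} (hB : IsBottom B)
    (hBG1 : GroupsInto B G) {s : ℤ} (hs : s ∈ G.labels) (hne : (G.gran s).Nonempty) :
    G.gran s = ⋃ b ∈ {b : ℤ | B.gran b ⊆ G.gran s}, B.gran b := by
  obtain ⟨S, _, hdec⟩ := hBG1 s hs hne
  apply Set.Subset.antisymm
  · intro x hx
    have hx' := hx
    rw [hdec] at hx'
    simp only [Set.mem_iUnion, exists_prop] at hx'
    obtain ⟨b, hb, hxb⟩ := hx'
    have hsub : B.gran b ⊆ G.gran s := by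
      rw [hdec]; exact Set.subset_biUnion_of_mem hb
    exact Set.mem_biUnion hsub hxb
  · exact Set.iUnion₂_subset fun b hb => hb

lemma groupsInto_trans {B G H : Granularity T} (hB : IsBottom B) (hGu : Unbounded G)
    (hBG1 : GroupsInto B G) (hGH1 : GroupsInto G H) : GroupsInto B H := by
  intro i hi hne
  obtain ⟨S, hSsub, hdec⟩ := hGH1 i hi hne
  refine ⟨{b | B.gran b ⊆ H.gran i}, by rw [hB.1]; exact Set.subset_univ _, ?_⟩
  apply Set.Subset.antisymm
  · intro x hx
    have hx' := hx
    rw [hdec] at hx'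
    simp only [Set.mem_iUnion, exists_prop] at hx'
    obtain ⟨s, hsS, hxs⟩ := hx'
    have hsl := hSsub hsS
    have hsat := gran_eq_bUnion_bot hB hBG1 hsl (hGu.2.2 _ hsl)
    rw [hsat] at hxs
    simp only [Set.mem_iUnion, exists_prop] at hxs
    obtain ⟨b, hb, hxb⟩ := hxs
    have hbsub : B.gran b ⊆ H.gran i := by
      refine hb.trans ?_
      rw [hdec]; exact Set.subset_biUnion_of_mem hsS
    exact Set.mem_biUnion hbsub hxb
  · exact Set.iUnion₂_subset fun b hb => hb

lemma iter_shift {B G : Granularity T} (hB : IsBottom B) (hGu : Unbounded G)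
    {PG NG : ℤ} (hBG : GroupsPeriodicallyInto B G PG NG)
    {s : ℤ} (hs : s ∈ G.labels) {k : ℕ} {j : ℕ → ℤ}
    (hdec : G.gran s = ⋃ r ∈ Finset.range (k + 1), B.gran (j r)) :
    ∀ t : ℕ, s + t * NG ∈ G.labels ∧
      G.gran (s + t * NG) = ⋃ r ∈ Finset.range (k + 1), B.gran (j r + t * PG) := by
  intro t
  induction t with
  | zero =>
    have e1 : s + ((0 : ℕ) : ℤ) * NG = s := by push_cast; ring
    have e2 : ∀ r, j r + ((0 : ℕ) : ℤ) * PG = j r := fun r => by push_cast; ring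
    rw [e1]
    simp only [e2]
    exact ⟨hs, hdec⟩
  | succ t ih =>
    obtain ⟨hmem, hdec'⟩ := ih
    have hmem' : s + t * NG + NG ∈ G.labels := by
      rcases hBG.2.2.2.1 _ hmem with h | ⟨g, hg, _⟩
      · exact h
      · exact absurd ⟨g, hg⟩ (no_greatest hGu)
    have hstep := hBG.2.2.2.2.1 (s + t * NG) hmem k (fun r => j r + t * PG)
      (fun r _ => by simp [hB.1]) hdec' hmem' (hGu.2.2 _ hmem')
    have e1 : s + ((t : ℤ) + 1) * NG = s + t * NG + NG := by ring
    have e2 : ∀ r, j r + (t : ℤ) * PG + PG = j r + ((t : ℤ) + 1) * PG := fun r => by ring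
    constructor
    · push_cast
      rw [e1]; exact hmem'
    · push_cast
      rw [e1, hstep.2]
      simp only [e2]

end Aux

theorem transitivity_periodically_groups_into (B G H : Granularity T)
    (PG NG PHG NHG α : ℤ)
    (hB : IsBottom B) (hGu : Unbounded G) (hHu : Unbounded H)
    (hBG : GroupsPeriodicallyInto B G PG NG)
    (hGH : GroupsPeriodicallyInto G H PHG NHG)
    (hα : 0 < α) (hPα : PHG = α * NG) :
    GroupsPeriodicallyInto B H (α * PG) NHG := by
  classical
  refine ⟨groupsInto_trans hB hGu hBG.1 hGH.1, mul_pos hα hBG.2.1, hGH.2.2.1,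
    hGH.2.2.2.1, ?_, ?_⟩
  · -- periodic shift condition
    intro i hi k j hj hdec hi' hne'
    refine ⟨fun r _ => by simp [hB.1], ?_⟩
    have hnei : (H.gran i).Nonempty := hHu.2.2 i hi
    obtain ⟨S, hSsub, hSdec⟩ := hGH.1 i hi hnei
    have hGsubH : ∀ s ∈ S, G.gran s ⊆ H.gran i := by
      intro s hsS
      rw [hSdec]; exact Set.subset_biUnion_of_mem hsS
    -- choice of a bottom granule inside each G-granule of the decomposition
    have hex : ∀ s ∈ S, ∃ b : ℤ, B.gran b ⊆ G.gran s := by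
      intro s hsS
      have hsl := hSsub hsS
      have hsat := gran_eq_bUnion_bot hB hBG.1 hsl (hGu.2.2 _ hsl)
      obtain ⟨x, hx⟩ := hGu.2.2 s hsl
      rw [hsat] at hx
      simp only [Set.mem_iUnion, exists_prop] at hx
      obtain ⟨b, hb, -⟩ := hx
      exact ⟨b, hb⟩
    choose! φ hφ using hex
    -- S is finite
    have himg : φ '' S ⊆ ↑((Finset.range (k + 1)).image j) := by
      rintro _ ⟨s, hsS, rfl⟩
      obtain ⟨x, hx⟩ := hB.2 (φ s)
      have hxH : x ∈ H.gran i := hGsubH s hsS (hφ s hsS hx)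
      rw [hdec] at hxH
      simp only [Set.mem_iUnion, exists_prop] at hxH
      obtain ⟨r, hr, hxr⟩ := hxH
      have hbj : φ s = j r := bot_label_eq hB hx hxr
      simp only [Finset.coe_image, Set.mem_image, Finset.mem_coe]
      exact ⟨r, hr, hbj.symm⟩
    have hinj : Set.InjOn φ S := by
      intro s hsS s' hsS' hφe
      obtain ⟨x, hx⟩ := hB.2 (φ s)
      exact gran_label_eq hGu (hSsub hsS) (hSsub hsS') (hφ s hsS hx)
        (hφ s' hsS' (hφe ▸ hx))
    have hSfin : S.Finite :=
      Set.Finite.of_finite_image ((Finset.finite_toSet _).subset himg) hinj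
    have hSne : S.Nonempty := by
      obtain ⟨x, hx⟩ := hnei
      rw [hSdec] at hx
      simp only [Set.mem_iUnion, exists_prop] at hx
      obtain ⟨s, hsS, -⟩ := hx
      exact ⟨s, hsS⟩
    obtain ⟨m, fG, hfG1, hfG2⟩ := exists_enum hSfin hSne
    have hdecG : H.gran i = ⋃ r ∈ Finset.range (m + 1), G.gran (fG r) := by
      rw [hSdec]; exact union_of_enum hfG1 hfG2 _
    obtain ⟨-, hshift⟩ := hGH.2.2.2.2.1 i hi m fG (fun r _ => hSsub (hfG1 r)) hdecG hi' hne'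
    have hα' : ((α.toNat : ℤ)) = α := Int.toNat_of_nonneg hα.le
    -- the bottom labels inside each G-granule
    set D : ℕ → Set ℤ := fun r => {b | B.gran b ⊆ G.gran (fG r)} with hD
    have hsatD : ∀ r, G.gran (fG r) = ⋃ b ∈ D r, B.gran b := fun r =>
      gran_eq_bUnion_bot hB hBG.1 (hSsub (hfG1 r)) (hGu.2.2 _ (hSsub (hfG1 r)))
    have hDsubJ : ∀ r b, b ∈ D r → ∃ r' ≤ k, b = j r' := by
      intro r b hb
      obtain ⟨x, hx⟩ := hB.2 b
      have hxH : x ∈ H.gran i := hGsubH _ (hfG1 r) (hb hx)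
      rw [hdec] at hxH
      simp only [Set.mem_iUnion, exists_prop, Finset.mem_range, Nat.lt_succ_iff] at hxH
      obtain ⟨r', hr', hxr'⟩ := hxH
      exact ⟨r', hr', bot_label_eq hB hx hxr'⟩
    have key : ∀ r : ℕ, G.gran (fG r + PHG) = ⋃ b ∈ D r, B.gran (b + α * PG) := by
      intro r
      have hsl : fG r ∈ G.labels := hSsub (hfG1 r)
      have hDfin : (D r).Finite := by
        refine ((Finset.range (k + 1)).image j).finite_toSet.subset ?_
        intro b hb
        obtain ⟨r', hr', hbe⟩ := hDsubJ r b hb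
        simp only [Finset.coe_image, Set.mem_image, Finset.mem_coe, Finset.mem_range,
          Nat.lt_succ_iff]
        exact ⟨r', hr', hbe.symm⟩
      have hDne : (D r).Nonempty := by
        obtain ⟨x, hx⟩ := hGu.2.2 _ hsl
        rw [hsatD r] at hx
        simp only [Set.mem_iUnion, exists_prop] at hx
        obtain ⟨b, hb, -⟩ := hx
        exact ⟨b, hb⟩
      obtain ⟨kr, g, hg1, hg2⟩ := exists_enum hDfin hDne
      have hdecr : G.gran (fG r) = ⋃ r' ∈ Finset.range (kr + 1), B.gran (g r') := by
        rw [hsatD r]; exact union_of_enum hg1 hg2 _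
      have hit := (iter_shift hB hGu hBG hsl hdecr α.toNat).2
      rw [hα'] at hit
      rw [hPα, hit]
      exact (union_of_enum hg1 hg2 (fun b => B.gran (b + α * PG))).symm
    rw [hshift]
    simp only [key]
    ext x
    simp only [Set.mem_iUnion, exists_prop, Finset.mem_range, Nat.lt_succ_iff]
    constructor
    · rintro ⟨r, hr, b, hbD, hxb⟩
      obtain ⟨r', hr', hbe⟩ := hDsubJ r b hbD
      exact ⟨r', hr', hbe ▸ hxb⟩
    · rintro ⟨r', hr', hx⟩
      have hjsub : B.gran (j r') ⊆ H.gran i := by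
        rw [hdec]
        intro x hx
        simp only [Set.mem_iUnion, exists_prop]
        exact ⟨r', Finset.mem_range.2 (Nat.lt_succ_of_le hr'), hx⟩
      obtain ⟨y, hy⟩ := hB.2 (j r')
      have hyH : y ∈ H.gran i := hjsub hy
      rw [hdecG] at hyH
      simp only [Set.mem_iUnion, exists_prop, Finset.mem_range, Nat.lt_succ_iff] at hyH
      obtain ⟨r, hr, hyg⟩ := hyH
      rw [hsatD r] at hyg
      simp only [Set.mem_iUnion, exists_prop] at hyg
      obtain ⟨b, hbD, hyb⟩ := hyg
      have hbe : b = j r' := bot_label_eq hB hyb hy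
      exact ⟨r, hr, b, hbD, hbe ▸ hx⟩
  · -- least element condition: vacuous since H is unbounded
    intro s hs
    exfalso
    obtain ⟨j', hj', hlt⟩ := hHu.1 s hs.1.1
    exact absurd (hs.2 ⟨hj', hHu.2.2 _ hj'⟩) (not_le.2 hlt)
end

section
/- Let G be a full-integer labeled unbounded granularity such that ⊥ groups periodically into G with period length P_G and period label distance N_G, let m be a positive integer, and let G' = Group_m(G). Then ⊥ groups periodically into G' with period length P_{G'} = (P_G · m)/gcd(m, N_G) and period label distance N_{G'} = N_G/gcd(m, N_G). -/
variable {T : Type*} [LinearOrder T]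

/-!
Write `d = gcd(m, N_G)`, `q = m / d` and `N' = N_G / d`, so that `N' · m = q · N_G`. The granule
`G'(i + N')` is the union of the `m` granules `G(t + q · N_G)` for `G(t) ⊆ G'(i)`. Applying the
periodicity of `⊥` in `G` `q` times, each `G(t + q · N_G)` is the union of the `⊥`-granules of
`G(t)` shifted by `q · P_G`; since `⊥`-granules are disjoint and each lies in a single granule of
`G`, these shifts together are exactly the `⊥`-granules of `G'(i)` shifted by `q · P_G`.
-/

theorem FullInteger.mem_labels {G : Granularity T} (h : FullInteger G) (i : ℤ) :
    i ∈ G.labels :=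
  h ▸ Set.mem_univ i

theorem Finset.exists_image_range_succ_eq {α : Type*} [DecidableEq α] {F : Finset α}
    (hF : F.Nonempty) : ∃ (k : ℕ) (j : ℕ → α), (Finset.range (k + 1)).image j = F := by
  obtain ⟨a, -⟩ := id hF
  refine ⟨F.card - 1, fun r => F.toList.getD r a, ?_⟩
  rw [Nat.sub_add_cancel hF.card_pos]
  ext s
  rw [Finset.mem_image, ← Finset.mem_toList, List.mem_iff_getElem]
  simp only [Finset.mem_range, Finset.length_toList]
  constructor
  · rintro ⟨r, hr, rfl⟩
    exact ⟨r, by simpa using hr, (List.getD_eq_getElem _ _ _).symm⟩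
  · rintro ⟨r, hr, rfl⟩
    exact ⟨r, by simpa using hr, List.getD_eq_getElem _ _ _⟩

namespace Granularity

theorem mem_labels_of_mem_gran (X : Granularity T) {i : ℤ} {x : T} (hx : x ∈ X.gran i) :
    i ∈ X.labels := by
  by_contra hi
  rw [X.empty_outside i hi] at hx
  exact hx

theorem eq_of_mem_gran (X : Granularity T) {i j : ℤ} {x : T} (hi : x ∈ X.gran i)
    (hj : x ∈ X.gran j) : i = j := by
  by_contra hne
  rcases lt_or_gt_of_ne hne with hlt | hlt
  · exact lt_irrefl x (X.mono i (X.mem_labels_of_mem_gran hi) j (X.mem_labels_of_mem_gran hj)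
      hlt ⟨x, hi⟩ ⟨x, hj⟩ x hi x hj)
  · exact lt_irrefl x (X.mono j (X.mem_labels_of_mem_gran hj) i (X.mem_labels_of_mem_gran hi)
      hlt ⟨x, hj⟩ ⟨x, hi⟩ x hj x hi)

end Granularity

namespace GroupsInto

variable {B G H : Granularity T}

theorem trans (hBG : GroupsInto B G) (hGH : GroupsInto G H) : GroupsInto B H := by
  intro j hj hne
  obtain ⟨S, hSG, hS⟩ := hGH j hj hne
  have hdec : ∀ i ∈ S, ∃ R ⊆ B.labels, G.gran i = ⋃ s ∈ R, B.gran s := by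
    intro i hi
    rcases (G.gran i).eq_empty_or_nonempty with hempty | hGi
    · exact ⟨∅, Set.empty_subset _, by simpa using hempty⟩
    · exact hBG i (hSG hi) hGi
  choose! R hRB hR using hdec
  refine ⟨⋃ i ∈ S, R i, Set.iUnion₂_subset hRB, ?_⟩
  rw [hS]
  simp only [Set.biUnion_iUnion]
  exact Set.iUnion₂_congr hR

theorem gran_subset_of_mem (h : GroupsInto B G) {s t : ℤ} {x : T} (hxB : x ∈ B.gran s)
    (hxG : x ∈ G.gran t) : B.gran s ⊆ G.gran t := by
  obtain ⟨S, -, hS⟩ := h t (G.mem_labels_of_mem_gran hxG) ⟨x, hxG⟩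
  rw [hS] at hxG ⊢
  obtain ⟨s', hs', hxs'⟩ := Set.mem_iUnion₂.mp hxG
  obtain rfl := B.eq_of_mem_gran hxB hxs'
  exact Set.subset_biUnion_of_mem hs'

theorem gran_eq_biUnion_filter (h : GroupsInto B G) {t : ℤ} {F : Finset ℤ}
    [DecidablePred fun s => B.gran s ⊆ G.gran t] (hsub : G.gran t ⊆ ⋃ s ∈ F, B.gran s) :
    G.gran t = ⋃ s ∈ F.filter (fun s => B.gran s ⊆ G.gran t), B.gran s := by
  refine subset_antisymm (fun x hx => ?_)
    (Set.iUnion₂_subset fun s hs => (Finset.mem_filter.mp hs).2)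
  obtain ⟨s, hs, hxs⟩ := Set.mem_iUnion₂.mp (hsub hx)
  exact Set.mem_biUnion (Finset.mem_filter.mpr ⟨hs, h.gran_subset_of_mem hxs hx⟩) hxs

theorem biUnion_gran_add_eq (h : GroupsInto B G) (hBne : ∀ s, (B.gran s).Nonempty) {c p : ℤ}
    (hshift : ∀ t (F : Finset ℤ),
      G.gran t = ⋃ s ∈ F, B.gran s → G.gran (t + c) = ⋃ s ∈ F, B.gran (s + p))
    {I F : Finset ℤ} (hIF : ⋃ t ∈ I, G.gran t = ⋃ s ∈ F, B.gran s) :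
    ⋃ t ∈ I, G.gran (t + c) = ⋃ s ∈ F, B.gran (s + p) := by
  classical
  have hdec : ∀ t ∈ I, G.gran (t + c) =
      ⋃ s ∈ F.filter (fun s => B.gran s ⊆ G.gran t), B.gran (s + p) := fun t ht =>
    hshift t _ (h.gran_eq_biUnion_filter (hIF ▸ Set.subset_biUnion_of_mem (u := G.gran) ht))
  apply subset_antisymm
  · refine Set.iUnion₂_subset fun t ht => ?_
    rw [hdec t ht]
    exact Set.biUnion_subset_biUnion_left (Finset.coe_subset.mpr (Finset.filter_subset _ _))
  · refine Set.iUnion₂_subset fun s hs => ?_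
    obtain ⟨x, hx⟩ := hBne s
    have hxI : x ∈ ⋃ t ∈ I, G.gran t := hIF ▸ Set.mem_biUnion hs hx
    obtain ⟨t, ht, hxt⟩ := Set.mem_iUnion₂.mp hxI
    have hst : s ∈ F.filter (fun s => B.gran s ⊆ G.gran t) :=
      Finset.mem_filter.mpr ⟨hs, h.gran_subset_of_mem hx hxt⟩
    calc B.gran (s + p)
        ⊆ G.gran (t + c) :=
          hdec t ht ▸ Set.subset_biUnion_of_mem (u := fun s => B.gran (s + p)) hst
      _ ⊆ ⋃ t ∈ I, G.gran (t + c) :=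
          Set.subset_biUnion_of_mem (u := fun t => G.gran (t + c)) ht

end GroupsInto

namespace GroupsPeriodicallyInto

variable {B G : Granularity T} {P N : ℤ}

theorem gran_add_eq_biUnion (h : GroupsPeriodicallyInto B G P N) (hB : FullInteger B)
    (hG : FullInteger G) (hGne : ∀ i, (G.gran i).Nonempty) {t : ℤ} {F : Finset ℤ}
    (hF : G.gran t = ⋃ s ∈ F, B.gran s) : G.gran (t + N) = ⋃ s ∈ F, B.gran (s + P) := by
  obtain ⟨-, -, -, -, hshift, -⟩ := h
  have hFne : F.Nonempty := by
    obtain ⟨x, hx⟩ := hGne t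
    rw [hF] at hx
    obtain ⟨s, hs, -⟩ := Set.mem_iUnion₂.mp hx
    exact ⟨s, hs⟩
  obtain ⟨k, j, rfl⟩ := Finset.exists_image_range_succ_eq hFne
  simp only [Finset.set_biUnion_finset_image] at hF ⊢
  exact (hshift t (hG.mem_labels t) k j (fun r _ => hB.mem_labels _) hF
    (hG.mem_labels _) (hGne _)).2

theorem gran_add_mul_eq_biUnion (h : GroupsPeriodicallyInto B G P N) (hB : FullInteger B)
    (hG : FullInteger G) (hGne : ∀ i, (G.gran i).Nonempty) {t : ℤ} {F : Finset ℤ}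
    (hF : G.gran t = ⋃ s ∈ F, B.gran s) {n : ℤ} (hn : 0 ≤ n) :
    G.gran (t + n * N) = ⋃ s ∈ F, B.gran (s + n * P) := by
  induction n, hn using Int.leInduction with
  | base => simpa using hF
  | succ n _ ih =>
    rw [← Finset.set_biUnion_finset_image (f := (· + n * P)) (g := B.gran)] at ih
    have hstep := h.gran_add_eq_biUnion hB hG hGne ih
    rw [Finset.set_biUnion_finset_image] at hstep
    rw [show t + (n + 1) * N = t + n * N + N by ring, hstep]
    simp only [add_one_mul, add_assoc]

end GroupsPeriodicallyInto

section Grouping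

variable {G G' : Granularity T} {m : ℤ}
  (hdef : ∀ i, G'.gran i = ⋃ j ∈ Finset.Icc ((i - 1) * m + 1) (i * m), G.gran j)
include hdef

theorem groupsInto_of_grouping (hG : FullInteger G) : GroupsInto G G' :=
  fun i _ _ => ⟨_, fun j _ => hG.mem_labels j, by rw [hdef, Finset.set_biUnion_coe]⟩

theorem gran_nonempty_of_grouping (hm : 0 < m) (hGne : ∀ i, (G.gran i).Nonempty) (i : ℤ) :
    (G'.gran i).Nonempty := by
  obtain ⟨x, hx⟩ := hGne ((i - 1) * m + 1)
  refine ⟨x, ?_⟩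
  rw [hdef]
  exact Set.mem_biUnion (Finset.mem_Icc.mpr ⟨le_rfl, by linarith⟩) hx

theorem gran_add_eq_biUnion_of_grouping (i n : ℤ) :
    G'.gran (i + n) = ⋃ t ∈ Finset.Icc ((i - 1) * m + 1) (i * m), G.gran (t + n * m) := by
  rw [hdef, show (i + n - 1) * m + 1 = (i - 1) * m + 1 + n * m by ring,
    show (i + n) * m = i * m + n * m by ring, ← Finset.image_add_right_Icc,
    Finset.set_biUnion_finset_image]

end Grouping

theorem group_operation_periodicity_general (B G G' : Granularity T) (PG NG m : ℤ)
    (hB : IsBottom B)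
    (hGfull : FullInteger G) (hGu : Unbounded G)
    (hBG : GroupsPeriodicallyInto B G PG NG) (hm : 0 < m)
    (hG'full : FullInteger G')
    (hdef : ∀ i : ℤ, G'.gran i = ⋃ j ∈ Finset.Icc ((i - 1) * m + 1) (i * m), G.gran j) :
    GroupsPeriodicallyInto B G' (PG * m / (Int.gcd m NG : ℤ)) (NG / (Int.gcd m NG : ℤ)) := by
  obtain ⟨hBfull, hBne⟩ := hB
  obtain ⟨hgroups, hPG, hNG, -⟩ := id hBG
  have hGne (t : ℤ) : (G.gran t).Nonempty := hGu.2.2 t (hGfull.mem_labels t)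
  set d : ℤ := (Int.gcd m NG : ℤ)
  have hdm : d ∣ m := Int.gcd_dvd_left m NG
  have hdN : d ∣ NG := Int.gcd_dvd_right m NG
  have hq : 0 < m / d := Int.ediv_pos_of_pos_of_dvd hm (Int.natCast_nonneg _) hdm
  have hN' : 0 < NG / d := Int.ediv_pos_of_pos_of_dvd hNG (Int.natCast_nonneg _) hdN
  have hP : PG * m / d = m / d * PG := by rw [Int.mul_ediv_assoc _ hdm, mul_comm]
  have hNm : NG / d * m = m / d * NG := by
    rw [← Int.mul_ediv_assoc' _ hdN, ← Int.mul_ediv_assoc' _ hdm, mul_comm]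
  refine ⟨hgroups.trans (groupsInto_of_grouping hdef hGfull), hP ▸ mul_pos hq hPG, hN',
    fun i _ => Or.inl (hG'full.mem_labels _), ?_,
    fun s _ => ⟨hG'full.mem_labels _, gran_nonempty_of_grouping hdef hm hGne _⟩⟩
  intro i _ k j _ hdecomp _ _
  refine ⟨fun r _ => FullInteger.mem_labels hBfull _, ?_⟩
  rw [gran_add_eq_biUnion_of_grouping hdef, hNm, hP]
  have hshift := hgroups.biUnion_gran_add_eq hBne
    (fun t F hF => hBG.gran_add_mul_eq_biUnion hBfull hGfull hGne hF hq.le)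
    (I := Finset.Icc ((i - 1) * m + 1) (i * m)) (F := (Finset.range (k + 1)).image j)
    (by rw [← hdef, hdecomp, Finset.set_biUnion_finset_image])
  rwa [Finset.set_biUnion_finset_image] at hshift

theorem group_operation_periodicity (B G G' : Granularity T) (PG NG m : ℤ)
    (hB : IsBottom B) (hBbot : GroupsInto B G)
    (hGfull : FullInteger G) (hGu : Unbounded G)
    (hBG : GroupsPeriodicallyInto B G PG NG) (hm : 0 < m)
    (hG'full : FullInteger G')
    (hdef : ∀ i : ℤ, G'.gran i = ⋃ j ∈ Finset.Icc ((i - 1) * m + 1) (i * m), G.gran j) :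
    GroupsPeriodicallyInto B G' (PG * m / (Int.gcd m NG : ℤ)) (NG / (Int.gcd m NG : ℤ)) :=
  group_operation_periodicity_general B G G' PG NG m hB hGfull hGu hBG hm hG'full hdef
end

section
/- Let G be a full-integer labeled unbounded granularity such that ⊥ groups periodically into G, let m be a positive integer, let G' = Group_m(G), and suppose l_G is defined. Then l_{G'} is defined and l_{G'} = ⌊(l_G − 1)/m⌋ + 1. -/
variable {T : Type*} [LinearOrder T]

/-- In a full-integer labeled granularity, a point lies in at most one granule. -/
lemma gran_label_eq_of_mem (G : Granularity T) (hfull : FullInteger G) {a b : ℤ} {x : T}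
    (ha : x ∈ G.gran a) (hb : x ∈ G.gran b) : a = b := by
  have hla : a ∈ G.labels := by rw [hfull]; trivial
  have hlb : b ∈ G.labels := by rw [hfull]; trivial
  by_contra h
  rcases lt_or_gt_of_ne h with h | h
  · exact lt_irrefl x (G.mono a hla b hlb h ⟨x, ha⟩ ⟨x, hb⟩ x ha x hb)
  · exact lt_irrefl x (G.mono b hlb a hla h ⟨x, hb⟩ ⟨x, ha⟩ x hb x ha)

theorem group_operation_first_label (B G G' : Granularity T) (PG NG m lG : ℤ)
    (hB : IsBottom B)
    (hGfull : FullInteger G) (hGu : Unbounded G)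
    (hBG : GroupsPeriodicallyInto B G PG NG) (hm : 0 < m)
    (hG'full : FullInteger G')
    (hdef : ∀ i : ℤ, G'.gran i = ⋃ j ∈ Finset.Icc ((i - 1) * m + 1) (i * m), G.gran j)
    (hl : IsFirstLabel B G lG) :
    IsFirstLabel B G' ((lG - 1) / m + 1) := by
  obtain ⟨hBfull, hBne⟩ := hB
  have hBfull' : FullInteger B := hBfull
  obtain ⟨i, hi, ⟨hiB, hlGG, hsub, huniq⟩, hmin⟩ := hl
  set j : ℤ := (lG - 1) / m + 1 with hjdef
  have hlabG : ∀ z : ℤ, z ∈ G.labels := fun z => by rw [hGfull]; trivial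
  have hlabG' : ∀ z : ℤ, z ∈ G'.labels := fun z => by rw [hG'full]; trivial
  have hlabB : ∀ z : ℤ, z ∈ B.labels := fun z => by rw [hBfull]; trivial
  -- G.gran lG ⊆ G'.gran j
  have hGsub : G.gran lG ⊆ G'.gran j := by
    rw [hdef]
    intro x hx
    have hmem : lG ∈ Finset.Icc ((j - 1) * m + 1) (j * m) := by
      rw [Finset.mem_Icc]
      constructor
      · have h1 : (lG - 1) / m * m ≤ lG - 1 := Int.ediv_mul_le _ hm.ne'
        have : j - 1 = (lG - 1) / m := by omega
        rw [this]; omega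
      · have h2 : lG - 1 < ((lG - 1) / m + 1) * m := Int.lt_ediv_add_one_mul_self _ hm
        have : j * m = ((lG - 1) / m + 1) * m := by rw [hjdef]
        omega
    exact Set.mem_biUnion hmem hx
  refine ⟨i, hi, ⟨hiB, hlabG' j, hsub.trans hGsub, ?_⟩, ?_⟩
  · -- uniqueness of j
    intro w _ hw
    obtain ⟨x, hx⟩ := hBne i
    exact gran_label_eq_of_mem G' hG'full (hw hx) (hGsub (hsub hx))
  · -- minimality
    intro i' hi' ⟨z', _, _, hsub', _⟩
    obtain ⟨x, hx⟩ := hBne i'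
    have hx' := hsub' hx
    rw [hdef, Set.mem_iUnion₂] at hx'
    obtain ⟨j₀, _, hxj₀⟩ := hx'
    obtain ⟨S, hSB, hSeq⟩ := hBG.1 j₀ (hlabG j₀) ⟨x, hxj₀⟩
    have hxS : x ∈ ⋃ i ∈ S, B.gran i := hSeq ▸ hxj₀
    rw [Set.mem_iUnion₂] at hxS
    obtain ⟨i'', hi''S, hxi''⟩ := hxS
    have : i'' = i' := gran_label_eq_of_mem B hBfull' hxi'' hx
    subst this
    have hBsubG : B.gran i'' ⊆ G.gran j₀ := by
      rw [hSeq]; exact Set.subset_biUnion_of_mem hi''S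
    refine hmin i'' hi' ⟨j₀, hlabB i'', hlabG j₀, hBsubG, ?_⟩
    intro w _ hw
    exact gran_label_eq_of_mem G hGfull (hw hx) hxj₀
end

section
/- Let G₁, G₂ be full-integer labeled unbounded granularities such that G₂ partitions G₁ and ⊥ groups periodically into both G₁ and G₂, let l, k, m be integers with 1 ≤ l ≤ m and k ≠ 0, and suppose G' = Alter_{l,k}^{m}(G₂, G₁) is an unbounded full-integer labeled granularity. Then up(l_{G₂})_{G₂}^{G'} is defined and l_{G'} = up(l_{G₂})_{G₂}^{G'}. -/
variable {T : Type*} [LinearOrder T]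

theorem alter_operation_first_label (B G₁ G₂ G' : Granularity T)
    (P₁ N₁ P₂ N₂ l k m lG2 : ℤ) (b t : ℤ → ℤ)
    (hB : IsBottom B)
    (hG₁full : FullInteger G₁) (hG₁u : Unbounded G₁)
    (hG₂full : FullInteger G₂) (hG₂u : Unbounded G₂)
    (hpart : Partitions G₂ G₁)
    (h₁ : GroupsPeriodicallyInto B G₁ P₁ N₁)
    (h₂ : GroupsPeriodicallyInto B G₂ P₂ N₂)
    (hl1 : 1 ≤ l) (hlm : l ≤ m) (hk : k ≠ 0)
    (hbt : ∀ i : ℤ, G₁.gran i = ⋃ j ∈ Finset.Icc (b i) (t i), G₂.gran j)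
    (hG'full : FullInteger G') (hG'u : Unbounded G')
    (hdef : ∀ i : ℤ,
      G'.gran i = ⋃ j ∈ Finset.Icc
        (if i = ((i - l) / m) * m + l then b i + ((i - l) / m) * k
         else b i + ((i - l) / m + 1) * k)
        (t i + ((i - l) / m + 1) * k), G₂.gran j)
    (hlG2 : IsFirstLabel B G₂ lG2) :
    ∃ z', UpDef G₂ G' lG2 z' ∧ IsFirstLabel B G' z' := by
  obtain ⟨hpartG, hfin⟩ := hpart
  have memB : ∀ i : ℤ, i ∈ B.labels := fun i => by rw [hB.1]; trivial
  have mem1 : ∀ i : ℤ, i ∈ G₁.labels := fun i => by rw [hG₁full]; trivial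
  have mem2 : ∀ i : ℤ, i ∈ G₂.labels := fun i => by rw [hG₂full]; trivial
  have mem' : ∀ i : ℤ, i ∈ G'.labels := fun i => by rw [hG'full]; trivial
  have ne1 : ∀ i, (G₁.gran i).Nonempty := fun i => hG₁u.2.2 i (mem1 i)
  have ne2 : ∀ i, (G₂.gran i).Nonempty := fun i => hG₂u.2.2 i (mem2 i)
  have ne' : ∀ i, (G'.gran i).Nonempty := fun i => hG'u.2.2 i (mem' i)
  have neB : ∀ i, (B.gran i).Nonempty := hB.2
  have disj : ∀ (G : Granularity T), (∀ i : ℤ, i ∈ G.labels) → (∀ i, (G.gran i).Nonempty) →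
      ∀ {i j : ℤ} {x : T}, x ∈ G.gran i → x ∈ G.gran j → i = j := by
    intro G hm hn i j x hi hj
    by_contra h
    rcases lt_or_gt_of_ne h with h | h
    · exact lt_irrefl x (G.mono i (hm i) j (hm j) h (hn i) (hn j) x hi x hj)
    · exact lt_irrefl x (G.mono j (hm j) i (hm i) h (hn j) (hn i) x hj x hi)
  have disj1 : ∀ {i j : ℤ} {x : T}, x ∈ G₁.gran i → x ∈ G₁.gran j → i = j := disj G₁ mem1 ne1
  have disj2 : ∀ {i j : ℤ} {x : T}, x ∈ G₂.gran i → x ∈ G₂.gran j → i = j := disj G₂ mem2 ne2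
  have disj' : ∀ {i j : ℤ} {x : T}, x ∈ G'.gran i → x ∈ G'.gran j → i = j := disj G' mem' ne'
  have disjB : ∀ {i j : ℤ} {x : T}, x ∈ B.gran i → x ∈ B.gran j → i = j := disj B memB neB
  -- interval membership characterization for G₂ inside G₁
  have memIcc1 : ∀ i j : ℤ, G₂.gran j ⊆ G₁.gran i ↔ j ∈ Finset.Icc (b i) (t i) := by
    intro i j
    constructor
    · intro h
      obtain ⟨x, hx⟩ := ne2 j
      have hx1 : x ∈ G₁.gran i := h hx
      rw [hbt i] at hx1
      simp only [Set.mem_iUnion] at hx1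
      obtain ⟨j', hj', hxj'⟩ := hx1
      rwa [disj2 hx hxj']
    · intro h x hx
      rw [hbt i]
      simp only [Set.mem_iUnion]
      exact ⟨j, h, hx⟩
  have cover1 : ∀ j : ℤ, ∃ i, j ∈ Finset.Icc (b i) (t i) := by
    intro j
    obtain ⟨i, _, h⟩ := hfin j (mem2 j)
    exact ⟨i, (memIcc1 i j).1 h⟩
  have uniq1 : ∀ i i' j : ℤ, j ∈ Finset.Icc (b i) (t i) → j ∈ Finset.Icc (b i') (t i') →
      i = i' := by
    intro i i' j h h'
    obtain ⟨x, hx⟩ := ne2 j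
    exact disj1 ((memIcc1 i j).2 h hx) ((memIcc1 i' j).2 h' hx)
  have hble : ∀ i, b i ≤ t i := by
    intro i
    obtain ⟨x, hx⟩ := ne1 i
    rw [hbt i] at hx
    simp only [Set.mem_iUnion] at hx
    obtain ⟨j, hj, -⟩ := hx
    simp only [Finset.mem_Icc] at hj
    omega
  have horder : ∀ i i' : ℤ, i < i' → t i < b i' := by
    intro i i' hii
    by_contra h
    push_neg at h
    rcases eq_or_lt_of_le h with h | h
    · have h1 : t i ∈ Finset.Icc (b i) (t i) := by
        simp only [Finset.mem_Icc]; exact ⟨hble i, le_refl _⟩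
      have h2 : t i ∈ Finset.Icc (b i') (t i') := by
        simp only [Finset.mem_Icc]
        constructor
        · omega
        · have := hble i'; omega
      exact absurd (uniq1 i i' (t i) h1 h2) (by omega)
    · obtain ⟨x, hx⟩ := ne2 (b i')
      obtain ⟨y, hy⟩ := ne2 (t i)
      have hx1 : x ∈ G₁.gran i' := (memIcc1 i' (b i')).2
        (by simp only [Finset.mem_Icc]; exact ⟨le_refl _, hble i'⟩) hx
      have hy1 : y ∈ G₁.gran i := (memIcc1 i (t i)).2
        (by simp only [Finset.mem_Icc]; exact ⟨hble i, le_refl _⟩) hy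
      have hxy : x < y := G₂.mono (b i') (mem2 _) (t i) (mem2 _) h (ne2 _) (ne2 _) x hx y hy
      have hyx : y < x := G₁.mono i (mem1 i) i' (mem1 i') hii (ne1 i) (ne1 i') y hy1 x hx1
      exact lt_asymm hxy hyx
  have hsucc : ∀ i : ℤ, b (i + 1) = t i + 1 := by
    intro i
    obtain ⟨i'', h''⟩ := cover1 (t i + 1)
    simp only [Finset.mem_Icc] at h''
    have hii : i < i'' := by
      by_contra hle
      push_neg at hle
      rcases eq_or_lt_of_le hle with h | h
      · subst h; omega
      · have h1 := horder i'' i h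
        have h2 := hble i
        omega
    have hnot : ¬ (i + 1 < i'') := by
      intro hlt
      have h1 := horder i (i + 1) (by omega)
      have h2 := horder (i + 1) i'' hlt
      have h3 := hble (i + 1)
      omega
    have hi'' : i'' = i + 1 := by omega
    subst hi''
    have := horder i (i + 1) (by omega)
    omega
  -- the altered bounds
  obtain ⟨B', hB'⟩ : ∃ B' : ℤ → ℤ, ∀ i : ℤ, B' i =
      (if i = ((i - l) / m) * m + l then b i + ((i - l) / m) * k
       else b i + ((i - l) / m + 1) * k) := ⟨_, fun i => rfl⟩
  obtain ⟨T', hT'⟩ : ∃ T' : ℤ → ℤ, ∀ i : ℤ, T' i = t i + ((i - l) / m + 1) * k :=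
    ⟨_, fun i => rfl⟩
  have hdef' : ∀ i : ℤ, G'.gran i = ⋃ j ∈ Finset.Icc (B' i) (T' i), G₂.gran j := by
    intro i; rw [hB' i, hT' i]; exact hdef i
  have hble' : ∀ i, B' i ≤ T' i := by
    intro i
    obtain ⟨x, hx⟩ := ne' i
    rw [hdef' i] at hx
    simp only [Set.mem_iUnion] at hx
    obtain ⟨j, hj, -⟩ := hx
    simp only [Finset.mem_Icc] at hj
    omega
  have hm0 : (0 : ℤ) < m := by omega
  have consec : ∀ i : ℤ, B' (i + 1) = T' i + 1 := by
    intro i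
    rw [hB' (i + 1), hT' i]
    by_cases hd : m ∣ (i + 1 - l)
    · have hc1 : (i + 1 - l) / m * m = i + 1 - l := Int.ediv_mul_cancel hd
      have hcond : i + 1 = ((i + 1 - l) / m) * m + l := by linarith
      rw [if_pos hcond]
      obtain ⟨q, hqe⟩ := hd
      have h1 : (i + 1 - l) / m = q := by
        rw [hqe]; exact Int.mul_ediv_cancel_left q hm0.ne'
      have hmq : m * (q - 1) = m * q - m := by ring
      have h2 : i - l = (m - 1) + m * (q - 1) := by linarith
      have hq : (i - l) / m = (i + 1 - l) / m - 1 := by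
        rw [h1, h2, Int.add_mul_ediv_left _ _ hm0.ne',
          Int.ediv_eq_zero_of_lt (by omega) (by omega)]
        ring
      rw [hq, hsucc i]; ring
    · have hcond : ¬ (i + 1 = ((i + 1 - l) / m) * m + l) := by
        intro h
        exact hd ⟨(i + 1 - l) / m, by
          have := mul_comm ((i + 1 - l) / m) m; linarith⟩
      rw [if_neg hcond]
      have hr0 : 0 ≤ (i - l) % m := Int.emod_nonneg _ hm0.ne'
      have hrm : (i - l) % m < m := Int.emod_lt_of_pos _ hm0
      have heq : m * ((i - l) / m) + (i - l) % m = i - l := Int.mul_ediv_add_emod _ _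
      have hne : (i - l) % m + 1 ≠ m := by
        intro h
        exact hd ⟨(i - l) / m + 1, by
          have : m * ((i - l) / m + 1) = m * ((i - l) / m) + m := by ring
          linarith⟩
      have h2 : i + 1 - l = ((i - l) % m + 1) + m * ((i - l) / m) := by linarith
      have hq : (i + 1 - l) / m = (i - l) / m := by
        rw [h2, Int.add_mul_ediv_left _ _ hm0.ne',
          Int.ediv_eq_zero_of_lt (by omega) (by omega), zero_add]
      rw [hq, hsucc i]; ring
  have st : ∀ i : ℤ, T' i + 1 ≤ T' (i + 1) := by
    intro i
    have h1 := consec i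
    have h2 := hble' (i + 1)
    omega
  have sb : ∀ i : ℤ, B' (i - 1) ≤ B' i - 1 := by
    intro i
    have h1 := consec (i - 1)
    have h2 := hble' (i - 1)
    have e : i - 1 + 1 = i := by ring
    rw [e] at h1
    omega
  have Tgrow : ∀ (n : ℕ) (i : ℤ), T' i + n ≤ T' (i + n) := by
    intro n
    induction n with
    | zero => intro i; simp
    | succ n ih =>
      intro i
      have h1 := ih i
      have h2 := st (i + (n : ℤ))
      have e : i + ((n : ℕ) : ℤ) + 1 = i + (((n + 1 : ℕ) : ℕ) : ℤ) := by push_cast; ring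
      rw [← e]
      push_cast
      omega
  have Bgrow : ∀ (n : ℕ) (i : ℤ), B' (i - n) ≤ B' i - n := by
    intro n
    induction n with
    | zero => intro i; simp
    | succ n ih =>
      intro i
      have h1 := ih i
      have h2 := sb (i - (n : ℤ))
      have e : i - ((n : ℕ) : ℤ) - 1 = i - (((n + 1 : ℕ) : ℕ) : ℤ) := by push_cast; ring
      rw [← e]
      push_cast
      omega
  have cover' : ∀ j : ℤ, ∃ i, B' i ≤ j ∧ j ≤ T' i := by
    intro j
    have find : ∀ (n : ℕ) (i : ℤ), B' i ≤ j → j ≤ T' (i + n) →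
        ∃ i', B' i' ≤ j ∧ j ≤ T' i' := by
      intro n
      induction n with
      | zero => intro i h1 h2; exact ⟨i, h1, by simpa using h2⟩
      | succ n ih =>
        intro i h1 h2
        by_cases hc : j ≤ T' i
        · exact ⟨i, h1, hc⟩
        · apply ih (i + 1)
          · have := consec i; omega
          · have e : i + 1 + ((n : ℕ) : ℤ) = i + (((n + 1 : ℕ) : ℕ) : ℤ) := by
              push_cast; ring
            rw [e]; exact h2
    set n₁ : ℕ := (B' 0 - j).toNat with hn₁
    have hb1 : B' ((0 : ℤ) - n₁) ≤ j := by
      have h1 := Bgrow n₁ 0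
      have h2 := Int.self_le_toNat (B' 0 - j)
      omega
    set i₁ : ℤ := (0 : ℤ) - n₁ with hi₁
    set n₂ : ℕ := (j - T' i₁).toNat with hn₂
    have ht1 : j ≤ T' (i₁ + n₂) := by
      have h1 := Tgrow n₂ i₁
      have h2 := Int.self_le_toNat (j - T' i₁)
      omega
    exact find n₂ i₁ hb1 ht1
  -- find the granule of G' containing G₂.gran lG2
  obtain ⟨z', hz1, hz2⟩ := cover' lG2
  have hsub : G₂.gran lG2 ⊆ G'.gran z' := by
    intro x hx
    rw [hdef' z']
    simp only [Set.mem_iUnion]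
    exact ⟨lG2, Finset.mem_Icc.2 ⟨hz1, hz2⟩, hx⟩
  obtain ⟨i₀, hi₀pos, hup₀, hmin₀⟩ := hlG2
  refine ⟨z', ⟨mem2 lG2, mem' z', hsub, ?_⟩, ?_⟩
  · intro w _ hsubw
    obtain ⟨x, hx⟩ := ne2 lG2
    exact disj' (hsubw hx) (hsub hx)
  · refine ⟨i₀, hi₀pos, ⟨memB i₀, mem' z', fun x hx => hsub (hup₀.2.2.1 hx), ?_⟩, ?_⟩
    · intro w _ hsubw
      obtain ⟨x, hx⟩ := neB i₀
      exact disj' (hsubw hx) (hsub (hup₀.2.2.1 hx))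
    · intro i' hi'pos hex
      obtain ⟨w, hw⟩ := hex
      apply hmin₀ i' hi'pos
      obtain ⟨x₀, hx₀⟩ := neB i'
      have hx' : x₀ ∈ G'.gran w := hw.2.2.1 hx₀
      rw [hdef' w] at hx'
      simp only [Set.mem_iUnion] at hx'
      obtain ⟨j₀, hj₀, hxj₀⟩ := hx'
      obtain ⟨S, hS, hSeq⟩ := h₂.1 j₀ (mem2 j₀) (ne2 j₀)
      have hsub2 : B.gran i' ⊆ G₂.gran j₀ := by
        have hx₀' : x₀ ∈ G₂.gran j₀ := hxj₀
        rw [hSeq] at hx₀'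
        simp only [Set.mem_iUnion] at hx₀'
        obtain ⟨s, hs, hxs⟩ := hx₀'
        have hsi : s = i' := disjB hxs hx₀
        subst hsi
        intro y hy
        rw [hSeq]
        simp only [Set.mem_iUnion]
        exact ⟨s, hs, hy⟩
      refine ⟨j₀, memB i', mem2 j₀, hsub2, ?_⟩
      intro w2 _ hsubw2
      exact disj2 (hsubw2 hx₀) (hsub2 hx₀)
end

section
/- Let G be a full-integer labeled unbounded granularity such that ⊥ groups periodically into G with period length P_G and period label distance N_G, let m be an integer, and let G' = Shift_m(G), i.e. G'(i) = G(i−m) for every integer i. Then ⊥ groups periodically into G' with period length P_G and period label distance N_G, and if l_G is defined then l_{G'} = l_G + m. -/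
variable {T : Type*} [LinearOrder T]

theorem shift_operation (B G G' : Granularity T) (PG NG m : ℤ)
    (hB : IsBottom B)
    (hGfull : FullInteger G) (hGu : Unbounded G)
    (hBG : GroupsPeriodicallyInto B G PG NG)
    (hG'full : FullInteger G')
    (hdef : ∀ i : ℤ, G'.gran i = G.gran (i - m)) :
    GroupsPeriodicallyInto B G' PG NG ∧
      ∀ lG : ℤ, IsFirstLabel B G lG → IsFirstLabel B G' (lG + m) := by
  obtain ⟨hBG1, hP, hN, hBG4, hBG5, hBG6⟩ := hBG
  have hGl : ∀ i : ℤ, i ∈ G.labels := fun i => hGfull ▸ Set.mem_univ i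
  have hG'l : ∀ i : ℤ, i ∈ G'.labels := fun i => hG'full ▸ Set.mem_univ i
  constructor
  · refine ⟨?_, hP, hN, ?_, ?_, ?_⟩
    · intro j hj hne
      rw [hdef] at hne ⊢
      exact hBG1 (j - m) (hGl _) hne
    · intro i _; exact Or.inl (hG'l _)
    · intro i _ k j hj hgr _ hne
      rw [hdef] at hgr
      rw [hdef] at hne
      have h := hBG5 (i - m) (hGl _) k j hj hgr (hGl _)
        (by rwa [show i - m + NG = i + NG - m by ring])
      refine ⟨h.1, ?_⟩
      rw [hdef, show i + NG - m = i - m + NG by ring]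
      exact h.2
    · intro s hs
      have hs' : IsLeast {i | i ∈ G.labels ∧ (G.gran i).Nonempty} (s - m) := by
        constructor
        · refine ⟨hGl _, ?_⟩
          have := hs.1.2; rwa [hdef] at this
        · intro x hx
          have hx' : x + m ∈ {i | i ∈ G'.labels ∧ (G'.gran i).Nonempty} := by
            refine ⟨hG'l _, ?_⟩
            rw [hdef, show x + m - m = x by ring]; exact hx.2
          have := hs.2 hx'
          linarith
      have h := hBG6 (s - m) hs'
      refine ⟨hG'l _, ?_⟩
      rw [hdef, show s + NG - m = s - m + NG by ring]
      exact h.2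
  · rintro lG ⟨i, hi, hup, hmin⟩
    refine ⟨i, hi, ?_, ?_⟩
    · obtain ⟨h1, _, h3, h4⟩ := hup
      refine ⟨h1, hG'l _, ?_, ?_⟩
      · rw [hdef, show lG + m - m = lG by ring]; exact h3
      · intro w _ hsub
        rw [hdef] at hsub
        have := h4 (w - m) (hGl _) hsub
        linarith
    · rintro i' hi' ⟨z', hz'⟩
      refine hmin i' hi' ⟨z' - m, hz'.1, hGl _, ?_, ?_⟩
      · have := hz'.2.2.1; rwa [hdef] at this
      · intro w _ hsub
        have := hz'.2.2.2 (w + m) (hG'l _)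
          (by rw [hdef, show w + m - m = w by ring]; exact hsub)
        linarith
end

section
/- Let G₁, G₂ be unbounded labeled granularities such that ⊥ groups periodically into G₁ with period length P_{G₁} and ⊥ groups periodically into G₂ with period length P_{G₂}, let G' = Combine(G₁, G₂), and let P_{G'} = lcm(P_{G₁}, P_{G₂}). For each i ∈ L̂_{G₁}^{P_{G'}} let s̃(i) = {j ∈ L̂_{G₂}^{P_{G'}} | ∅ ≠ G₂(j) ⊆ G₁(i)}. Then L̂_{G'}^{P_{G'}} = {i ∈ L̂_{G₁}^{P_{G'}} | s̃(i) ≠ ∅}. -/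
variable {T : Type*} [LinearOrder T]

theorem combine_operation_labels (B G₁ G₂ G' : Granularity T)
    (P₁ N₁ P₂ N₂ : ℤ)
    (hB : IsBottom B) (h₁u : Unbounded G₁) (h₂u : Unbounded G₂)
    (h₁ : GroupsPeriodicallyInto B G₁ P₁ N₁)
    (h₂ : GroupsPeriodicallyInto B G₂ P₂ N₂)
    (hlab : G'.labels = {i ∈ G₁.labels |
        ∃ j ∈ G₂.labels, (G₂.gran j).Nonempty ∧ G₂.gran j ⊆ G₁.gran i})
    (hgran : ∀ i ∈ G'.labels,
        G'.gran i = ⋃ j ∈ {j ∈ G₂.labels | (G₂.gran j).Nonempty ∧ G₂.gran j ⊆ G₁.gran i},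
          G₂.gran j) :
    LHat B G' ((Int.lcm P₁ P₂ : ℤ)) =
      {i ∈ LHat B G₁ ((Int.lcm P₁ P₂ : ℤ)) |
        ∃ j ∈ LHat B G₂ ((Int.lcm P₁ P₂ : ℤ)),
          (G₂.gran j).Nonempty ∧ G₂.gran j ⊆ G₁.gran i} := by
  have hdisj : ∀ n m : ℤ, ∀ t : T, t ∈ B.gran n → t ∈ B.gran m → n = m := by
    intro n m t htn htm
    by_contra h
    rcases lt_or_gt_of_ne h with hlt | hlt
    · exact absurd (B.mono n (hB.1 ▸ Set.mem_univ n) m (hB.1 ▸ Set.mem_univ m) hlt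
        (hB.2 n) (hB.2 m) t htn t htm) (lt_irrefl t)
    · exact absurd (B.mono m (hB.1 ▸ Set.mem_univ m) n (hB.1 ▸ Set.mem_univ n) hlt
        (hB.2 m) (hB.2 n) t htm t htn) (lt_irrefl t)
  ext i
  simp only [LHat, Set.mem_setOf_eq, Set.mem_sep_iff]
  constructor
  · rintro ⟨hiG', n, hn1, hnP, hsub⟩
    have hiG1 : i ∈ G₁.labels := by
      have := hlab ▸ hiG'
      exact this.1
    obtain ⟨t, htn⟩ := hB.2 n
    have ht' : t ∈ G'.gran i := hsub htn
    rw [hgran i hiG'] at ht'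
    obtain ⟨j, hjS, htj⟩ := Set.mem_iUnion₂.mp ht'
    obtain ⟨hjL, hjne, hjsub⟩ := hjS
    obtain ⟨S, hSsub, heq⟩ := h₂.1 j hjL hjne
    have htj' := heq ▸ htj
    obtain ⟨m, hmS, htm⟩ := Set.mem_iUnion₂.mp htj'
    have hnm : n = m := hdisj n m t htn htm
    have hBn : B.gran n ⊆ G₂.gran j := by
      rw [heq, hnm]
      exact Set.subset_biUnion_of_mem hmS
    refine ⟨⟨hiG1, n, hn1, hnP, fun x hx => hjsub (hBn hx)⟩,
      j, ⟨hjL, n, hn1, hnP, hBn⟩, hjne, hjsub⟩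
  · rintro ⟨⟨hiG1, _⟩, j, ⟨hjL, n, hn1, hnP, hBn⟩, hjne, hjsub⟩
    have hiG' : i ∈ G'.labels := by
      rw [hlab]
      exact ⟨hiG1, j, hjL, hjne, hjsub⟩
    refine ⟨hiG', n, hn1, hnP, fun x hx => ?_⟩
    rw [hgran i hiG']
    exact Set.mem_biUnion ⟨hjL, hjne, hjsub⟩ (hBn hx)
end

section
/- Let G₁ be a full-integer labeled unbounded granularity and G₂ an unbounded label-aligned subgranularity of G₁, with ⊥ grouping periodically into G₁ with period length P_{G₁} and into G₂ with period length P_{G₂}, let G' = Anchored-group(G₁, G₂), and let P_{G'} = lcm(P_{G₁}, P_{G₂}). Then L̂_{G'}^{P_{G'}} = L̂_{G₂}^{P_{G'}} if l_{G₂} = l_{G₁}, and L̂_{G'}^{P_{G'}} = {l'_{G₂}} ∪ L̂_{G₂}^{P_{G'}} otherwise, where l'_{G₂} is the greatest label of L_{G₂} smaller than l_{G₂}. -/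
variable {T : Type*} [LinearOrder T]

/-!
A granule of `G'` is the union of the `G₁`-granules from its anchor `i` up to the next anchor `i'`,
so `i ∈ L̂_{G'}` iff the gap `[i, i')` meets `H := L̂_{G₁}`. Since `⊥` groups into `G₁` and the
labels of `G₁` are ordered like the bottom granules they contain, `H` is an interval of labels;
its least element is `l_{G₁}`, which lies in `H` because by periodicity the first positive bottom
granule inside `G₁(l_{G₁})` has index at most `P_{G₁}`. Moreover `l_{G₂}` is the first label of
`G₂` at or after `l_{G₁}`. So a gap meets `H` either at its anchor, i.e. `i ∈ L̂_{G₂}`, or because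
it contains `l_{G₁}` strictly after its anchor, which happens exactly for `i = l'_{G₂}` when
`l_{G₂} ≠ l_{G₁}`.
-/

theorem Set.Finite.exists_nat_enum {α : Type*} {s : Set α} (hs : s.Finite) (hne : s.Nonempty) :
    ∃ (k : ℕ) (j : ℕ → α), (∀ r ≤ k, j r ∈ s) ∧ ∀ a ∈ s, ∃ r ≤ k, j r = a := by
  classical
  obtain ⟨n, f, -, hf⟩ := hs.fin_param
  obtain ⟨a₀, ha₀⟩ := hne
  refine ⟨n - 1, fun r => if h : r < n then f ⟨r, h⟩ else a₀, fun r _ => ?_, fun a ha => ?_⟩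
  · dsimp only
    split_ifs
    · exact hf ▸ Set.mem_range_self _
    · exact ha₀
  · obtain ⟨⟨r, hr⟩, rfl⟩ := hf ▸ ha
    exact ⟨r, by omega, dif_pos hr⟩

theorem exists_isLeast_gt {L : Set ℤ} {i j : ℤ} (hj : j ∈ L) (hij : i < j) :
    ∃ i', IsLeast {w ∈ L | i < w} i' := by
  obtain ⟨i', hi', hmin⟩ := Int.exists_least_of_bdd (P := fun w => w ∈ L ∧ i < w)
    ⟨i, fun w hw => hw.2.le⟩ ⟨j, hj, hij⟩
  exact ⟨i', hi', hmin⟩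

namespace Granularity

variable (G : Granularity T)

theorem mem_labels_of_mem {i : ℤ} {x : T} (hx : x ∈ G.gran i) : i ∈ G.labels := by
  by_contra h
  simp [G.empty_outside i h] at hx

theorem le_of_mem_of_mem_of_le {a b : ℤ} {x y : T} (hx : x ∈ G.gran a) (hy : y ∈ G.gran b)
    (hxy : x ≤ y) : a ≤ b := by
  by_contra! hba
  exact (G.mono b (G.mem_labels_of_mem hy) a (G.mem_labels_of_mem hx) hba ⟨y, hy⟩ ⟨x, hx⟩
    y hy x hx).not_ge hxy

theorem eq_of_mem_of_mem {a b : ℤ} {x : T} (ha : x ∈ G.gran a) (hb : x ∈ G.gran b) : a = b :=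
  le_antisymm (G.le_of_mem_of_mem_of_le ha hb le_rfl) (G.le_of_mem_of_mem_of_le hb ha le_rfl)

end Granularity

namespace GroupsInto

variable {B G : Granularity T} (hBG : GroupsInto B G)
include hBG

theorem subset_of_mem {n j : ℤ} {x : T} (hxB : x ∈ B.gran n) (hxG : x ∈ G.gran j) :
    B.gran n ⊆ G.gran j := by
  obtain ⟨S, -, hS⟩ := hBG j (G.mem_labels_of_mem hxG) ⟨x, hxG⟩
  rw [hS] at hxG ⊢
  obtain ⟨m, hmS, hxm⟩ := Set.mem_iUnion₂.mp hxG
  rw [B.eq_of_mem_of_mem hxB hxm]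
  exact Set.subset_biUnion_of_mem hmS

theorem exists_subset {j : ℤ} (hj : (G.gran j).Nonempty) : ∃ m, B.gran m ⊆ G.gran j := by
  obtain ⟨x, hx⟩ := hj
  obtain ⟨S, -, hS⟩ := hBG j (G.mem_labels_of_mem hx) ⟨x, hx⟩
  obtain ⟨m, -, hxm⟩ := Set.mem_iUnion₂.mp (hS ▸ hx)
  exact ⟨m, hBG.subset_of_mem hxm hx⟩

theorem eq_biUnion (j : ℤ) : G.gran j = ⋃ m ∈ {m | B.gran m ⊆ G.gran j}, B.gran m := by
  refine subset_antisymm (fun x hx => ?_) (Set.iUnion₂_subset fun m hm => hm)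
  obtain ⟨S, -, hS⟩ := hBG j (G.mem_labels_of_mem hx) ⟨x, hx⟩
  obtain ⟨m, -, hxm⟩ := Set.mem_iUnion₂.mp (hS ▸ hx)
  exact Set.mem_biUnion (hBG.subset_of_mem hxm hx) hxm

end GroupsInto

theorem lHat_mono {B G : Granularity T} {P Q : ℤ} (hPQ : P ≤ Q) :
    LHat B G P ⊆ LHat B G Q :=
  fun _ ⟨hi, n, h1, hnP, hn⟩ => ⟨hi, n, h1, hnP.trans hPQ, hn⟩

section Bottom

variable {B G : Granularity T} (hB : ∀ n, (B.gran n).Nonempty)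
include hB

theorem Granularity.le_of_subset_of_subset {m n a b : ℤ} (hm : B.gran m ⊆ G.gran a)
    (hn : B.gran n ⊆ G.gran b) (hmn : m ≤ n) : a ≤ b := by
  obtain ⟨x, hx⟩ := hB m
  rcases hmn.eq_or_lt with rfl | hlt
  · exact G.le_of_mem_of_mem_of_le (hm hx) (hn hx) le_rfl
  · obtain ⟨y, hy⟩ := hB n
    exact G.le_of_mem_of_mem_of_le (hm hx) (hn hy) (B.mono m (B.mem_labels_of_mem hx) n
      (B.mem_labels_of_mem hy) hlt ⟨x, hx⟩ ⟨y, hy⟩ x hx y hy).le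

theorem upDef_of_subset {n j : ℤ} (h : B.gran n ⊆ G.gran j) : UpDef B G n j := by
  obtain ⟨x, hx⟩ := hB n
  exact ⟨B.mem_labels_of_mem hx, G.mem_labels_of_mem (h hx), h,
    fun w _ hw => G.eq_of_mem_of_mem (hw hx) (h hx)⟩

theorem Granularity.finite_setOf_subset {a b lo hi i : ℤ} (ha : B.gran a ⊆ G.gran lo)
    (hb : B.gran b ⊆ G.gran hi) (hlo : lo < i) (hhi : i < hi) :
    {m | B.gran m ⊆ G.gran i}.Finite :=
  (Set.finite_Ioo a b).subset fun _ hm =>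
    ⟨lt_of_not_ge fun h => (le_of_subset_of_subset hB hm ha h).not_gt hlo,
     lt_of_not_ge fun h => (le_of_subset_of_subset hB hb hm h).not_gt hhi⟩

theorem GroupsPeriodicallyInto.sub_period_subset {P N i n : ℤ}
    (h : GroupsPeriodicallyInto B G P N) (hne : (G.gran i).Nonempty)
    (hfin : {m | B.gran m ⊆ G.gran i}.Finite) (hn : B.gran n ⊆ G.gran (i + N)) :
    B.gran (n - P) ⊆ G.gran i := by
  obtain ⟨k, j, hjS, hSj⟩ := hfin.exists_nat_enum (h.1.exists_subset hne)
  have hcover : G.gran i = ⋃ r ∈ Finset.range (k + 1), B.gran (j r) := by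
    rw [h.1.eq_biUnion i]
    refine subset_antisymm (Set.iUnion₂_subset fun m hm => ?_)
      (Set.iUnion₂_subset fun r hr => Set.subset_biUnion_of_mem (u := B.gran)
        (hjS r (Nat.lt_succ_iff.mp (Finset.mem_range.mp hr))))
    obtain ⟨r, hr, rfl⟩ := hSj m hm
    exact Set.subset_biUnion_of_mem (u := fun r => B.gran (j r))
      (Finset.mem_range.mpr (Nat.lt_succ_of_le hr))
  obtain ⟨x, hx⟩ := hB n
  have hiN := G.mem_labels_of_mem (hn hx)
  obtain ⟨-, hshift⟩ := h.2.2.2.2.1 i (G.mem_labels_of_mem hne.some_mem) k j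
    (fun r _ => B.mem_labels_of_mem (hB (j r)).some_mem) hcover hiN ⟨x, hn hx⟩
  obtain ⟨r, hr, hxr⟩ := Set.mem_iUnion₂.mp (hshift ▸ hn hx)
  rw [B.eq_of_mem_of_mem hx hxr, add_sub_cancel_right]
  exact hjS r (Nat.lt_succ_iff.mp (Finset.mem_range.mp hr))

theorem ordConnected_lHat (hBG : GroupsInto B G) (hG : ∀ j, (G.gran j).Nonempty) (P : ℤ) :
    (LHat B G P).OrdConnected := by
  refine ⟨fun i hi k hk j hj => ?_⟩
  obtain ⟨-, ni, hni1, hniP, hni⟩ := hi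
  obtain ⟨-, nk, hnk1, hnkP, hnk⟩ := hk
  obtain ⟨hij, hjk⟩ := hj
  obtain ⟨m, hm⟩ := hBG.exists_subset (hG j)
  refine ⟨G.mem_labels_of_mem (hG j).some_mem, ?_⟩
  rcases lt_or_ge m 1 with hm1 | hm1
  · have hji : j = i := le_antisymm (Granularity.le_of_subset_of_subset hB hm hni (by omega)) hij
    exact ⟨ni, hni1, hniP, hji ▸ hni⟩
  rcases le_or_gt m P with hmP | hmP
  · exact ⟨m, hm1, hmP, hm⟩
  · have hjk' : j = k := le_antisymm hjk (Granularity.le_of_subset_of_subset hB hnk hm (by omega))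
    exact ⟨nk, hnk1, hnkP, hjk' ▸ hnk⟩

namespace IsFirstLabel

variable {l : ℤ} (hl : IsFirstLabel B G l)
include hl

theorem le_of_subset {n j : ℤ} (hn : 0 < n) (h : B.gran n ⊆ G.gran j) : l ≤ j := by
  obtain ⟨n₀, -, hup, hmin⟩ := hl
  exact Granularity.le_of_subset_of_subset hB hup.2.2.1 h (hmin n hn ⟨j, upDef_of_subset hB h⟩)

theorem exists_pos_subset (hBG : GroupsInto B G) {w : ℤ} (hw : (G.gran w).Nonempty)
    (hlw : l ≤ w) : ∃ n, 0 < n ∧ B.gran n ⊆ G.gran w := by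
  obtain ⟨n₀, hn₀, hup, -⟩ := hl
  obtain ⟨m, hm⟩ := hBG.exists_subset hw
  rcases lt_or_ge 0 m with hm0 | hm0
  · exact ⟨m, hm0, hm⟩
  · have hwl : w = l :=
      le_antisymm (Granularity.le_of_subset_of_subset hB hm hup.2.2.1 (by omega)) hlw
    exact ⟨n₀, hn₀, hwl ▸ hup.2.2.1⟩

/-- The first label already occurs within one period: otherwise shifting its first bottom granule
back by `P` would give an earlier positive bottom granule in the granule `N` labels before. -/
theorem mem_lHat (hG : ∀ j, (G.gran j).Nonempty) {P N : ℤ}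
    (h : GroupsPeriodicallyInto B G P N) : l ∈ LHat B G P := by
  obtain ⟨n₀, hn₀, hup, hmin⟩ := hl
  refine ⟨hup.2.1, n₀, hn₀, ?_, hup.2.2.1⟩
  by_contra! hPn₀
  obtain ⟨a, ha⟩ := h.1.exists_subset (hG (l - N - 1))
  obtain ⟨b, hb⟩ := h.1.exists_subset (hG (l - N + 1))
  have hfin := Granularity.finite_setOf_subset hB ha hb (sub_one_lt _) (lt_add_one _)
  have hback := h.sub_period_subset hB (n := n₀) (hG (l - N)) hfin
    (by rw [sub_add_cancel]; exact hup.2.2.1)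
  have := hmin (n₀ - P) (by omega) ⟨l - N, upDef_of_subset hB hback⟩
  linarith [h.2.1]

theorem isLeast_lHat (hG : ∀ j, (G.gran j).Nonempty) {P N Q : ℤ}
    (h : GroupsPeriodicallyInto B G P N) (hPQ : P ≤ Q) : IsLeast (LHat B G Q) l :=
  ⟨lHat_mono hPQ (hl.mem_lHat hB hG h), fun _ ⟨_, _, hn, _, hsub⟩ => hl.le_of_subset hB hn hsub⟩

theorem isLeast_of_labelAligned {G₂ : Granularity T} (hBG : GroupsInto B G)
    (hG : ∀ j, (G.gran j).Nonempty) (hsub : LabelAlignedSub G₂ G)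
    (hG₂ : ∀ i ∈ G₂.labels, (G₂.gran i).Nonempty) {l₂ : ℤ} (hl₂ : IsFirstLabel B G₂ l₂) :
    IsLeast {w ∈ G₂.labels | l ≤ w} l₂ := by
  have hgran : ∀ i ∈ G₂.labels, G₂.gran i = G.gran i := fun i hi => hsub.2 i hi (hG₂ i hi)
  obtain ⟨n₂, hn₂, hup₂, -⟩ := id hl₂
  refine ⟨⟨hup₂.2.1, hl.le_of_subset hB hn₂ (hgran _ hup₂.2.1 ▸ hup₂.2.2.1)⟩, fun w hw => ?_⟩
  obtain ⟨n, hn, hsubn⟩ := hl.exists_pos_subset hB hBG (hG w) hw.2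
  exact hl₂.le_of_subset hB hn (by rwa [hgran w hw.1])

end IsFirstLabel

theorem mem_lHat_iff_of_gran_eq_biUnion {G₁ G' : Granularity T} (hBG : GroupsInto B G₁)
    {P i i' : ℤ} (hi : i ∈ G'.labels)
    (hgi : G'.gran i = ⋃ j ∈ Finset.Icc i (i' - 1), G₁.gran j) :
    i ∈ LHat B G' P ↔ ∃ j ∈ LHat B G₁ P, i ≤ j ∧ j < i' := by
  constructor
  · rintro ⟨-, n, hn1, hnP, hn⟩
    obtain ⟨x, hx⟩ := hB n
    obtain ⟨j, hj, hxj⟩ := Set.mem_iUnion₂.mp (hgi ▸ hn hx)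
    obtain ⟨hij, hji'⟩ := Finset.mem_Icc.mp hj
    exact ⟨j, ⟨G₁.mem_labels_of_mem hxj, n, hn1, hnP, hBG.subset_of_mem hx hxj⟩, hij, by omega⟩
  · rintro ⟨j, ⟨-, n, hn1, hnP, hn⟩, hij, hji'⟩
    refine ⟨hi, n, hn1, hnP, hn.trans ?_⟩
    rw [hgi]
    exact Set.subset_biUnion_of_mem (u := G₁.gran) (Finset.mem_Icc.mpr ⟨hij, by omega⟩)

end Bottom

theorem LabelAlignedSub.lHat_eq {B G₁ G₂ : Granularity T} (hsub : LabelAlignedSub G₂ G₁)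
    (hG₂ : ∀ i ∈ G₂.labels, (G₂.gran i).Nonempty) (P : ℤ) :
    LHat B G₂ P = G₂.labels ∩ LHat B G₁ P := by
  ext i
  constructor
  · rintro ⟨hi, hn⟩
    exact ⟨hi, hsub.1 hi, hsub.2 i hi (hG₂ i hi) ▸ hn⟩
  · rintro ⟨hi, -, hn⟩
    exact ⟨hi, hsub.2 i hi (hG₂ i hi) ▸ hn⟩

section Anchoring

variable {L H : Set ℤ} {l₁ l₂ : ℤ}

theorem exists_mem_gap_iff (hH : IsLeast H l₁) (hHc : H.OrdConnected)
    (hl₂ : IsLeast {w ∈ L | l₁ ≤ w} l₂) {i i' : ℤ} (hi : i ∈ L)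
    (hi' : IsLeast {w ∈ L | i < w} i') :
    (∃ j ∈ H, i ≤ j ∧ j < i') ↔ i ∈ H ∨ (l₂ ≠ l₁ ∧ IsGreatest {w ∈ L | w < l₂} i) := by
  constructor
  · rintro ⟨j, hjH, hij, hji'⟩
    by_cases hiH : i ∈ H
    · exact Or.inl hiH
    have hil₁ : i < l₁ := lt_of_not_ge fun h => hiH (hHc.out hH.1 hjH ⟨h, hij⟩)
    have hl₁j : l₁ ≤ j := hH.2 hjH
    have hl₂i' : l₂ = i' :=
      le_antisymm (hl₂.2 ⟨hi'.1.1, by omega⟩) (hi'.2 ⟨hl₂.1.1, by linarith [hl₂.1.2]⟩)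
    subst hl₂i'
    refine Or.inr ⟨by omega, ⟨hi, hi'.1.2⟩, fun w hw => ?_⟩
    by_contra! hiw
    exact (hi'.2 ⟨hw.1, hiw⟩).not_gt hw.2
  · rintro (hiH | ⟨hne, hgr⟩)
    · exact ⟨i, hiH, le_rfl, hi'.1.2⟩
    have hl₁l₂ : l₁ < l₂ := lt_of_le_of_ne hl₂.1.2 hne.symm
    have hil₁ : i < l₁ := lt_of_not_ge fun h => (hl₂.2 ⟨hgr.1.1, h⟩).not_gt hgr.1.2
    have hi'l₂ : i' = l₂ := by
      refine le_antisymm (hi'.2 ⟨hl₂.1.1, hgr.1.2⟩) (le_of_not_gt fun h => ?_)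
      exact (hgr.2 ⟨hi'.1.1, h⟩).not_gt hi'.1.2
    exact ⟨l₁, hH.1, hil₁.le, hi'l₂ ▸ hl₁l₂⟩

end Anchoring

theorem anchored_group_labels (B G₁ G₂ G' : Granularity T)
    (P₁ N₁ P₂ N₂ lG1 lG2 : ℤ)
    (hB : IsBottom B)
    (hG₁full : FullInteger G₁) (h₁u : Unbounded G₁) (h₂u : Unbounded G₂)
    (hsub : LabelAlignedSub G₂ G₁)
    (h₁ : GroupsPeriodicallyInto B G₁ P₁ N₁)
    (h₂ : GroupsPeriodicallyInto B G₂ P₂ N₂)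
    (hlab : G'.labels = G₂.labels)
    (hgran : ∀ i ∈ G'.labels, ∀ i', IsLeast {w ∈ G₂.labels | i < w} i' →
        G'.gran i = ⋃ j ∈ Finset.Icc i (i' - 1), G₁.gran j)
    (hlG1 : IsFirstLabel B G₁ lG1) (hlG2 : IsFirstLabel B G₂ lG2) :
    (lG2 = lG1 →
      LHat B G' ((Int.lcm P₁ P₂ : ℤ)) = LHat B G₂ ((Int.lcm P₁ P₂ : ℤ))) ∧
    (lG2 ≠ lG1 → ∀ lG2' : ℤ, IsGreatest {w ∈ G₂.labels | w < lG2} lG2' →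
      LHat B G' ((Int.lcm P₁ P₂ : ℤ)) =
        insert lG2' (LHat B G₂ ((Int.lcm P₁ P₂ : ℤ)))) := by
  set P : ℤ := (Int.lcm P₁ P₂ : ℤ)
  have hG₁ : ∀ j, (G₁.gran j).Nonempty := fun j => h₁u.2.2 j (hG₁full ▸ Set.mem_univ j)
  have hP : 0 < P := Int.natCast_pos.mpr (Int.lcm_pos h₁.2.1.ne' h₂.2.1.ne')
  have hP₁P : P₁ ≤ P := Int.le_of_dvd hP (Int.dvd_lcm_left P₁ P₂)
  have hH := hlG1.isLeast_lHat hB.2 hG₁ h₁ hP₁P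
  have hl₂ := hlG1.isLeast_of_labelAligned hB.2 h₁.1 hG₁ hsub h₂u.2.2 hlG2
  have key : ∀ i, i ∈ LHat B G' P ↔ i ∈ G₂.labels ∧
      (i ∈ LHat B G₁ P ∨ (lG2 ≠ lG1 ∧ IsGreatest {w ∈ G₂.labels | w < lG2} i)) := by
    intro i
    by_cases hi : i ∈ G₂.labels
    · obtain ⟨j, hj, hij⟩ := h₂u.2.1 i hi
      obtain ⟨i', hi'⟩ := exists_isLeast_gt hj hij
      rw [mem_lHat_iff_of_gran_eq_biUnion hB.2 h₁.1 (hlab ▸ hi) (hgran i (hlab ▸ hi) i' hi'),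
        exists_mem_gap_iff hH (ordConnected_lHat hB.2 h₁.1 hG₁ P) hl₂ hi hi']
      exact (and_iff_right hi).symm
    · exact iff_of_false (fun h => hi (hlab ▸ h.1)) (fun h => hi h.1)
  rw [hsub.lHat_eq h₂u.2.2]
  refine ⟨fun hl => Set.ext fun i => by simp [key, hl], fun hl lG2' hlG2' => Set.ext fun i => ?_⟩
  have hgr : IsGreatest {w ∈ G₂.labels | w < lG2} i ↔ i = lG2' :=
    ⟨fun h => h.unique hlG2', fun h => h ▸ hlG2'⟩
  rw [key, hgr, Set.mem_insert_iff, Set.mem_inter_iff]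
  constructor
  · rintro ⟨hi, hiH | ⟨-, rfl⟩⟩
    exacts [Or.inr ⟨hi, hiH⟩, Or.inl rfl]
  · rintro (rfl | ⟨hi, hiH⟩)
    exacts [⟨hlG2'.1.1, Or.inr ⟨hl, rfl⟩⟩, ⟨hi, Or.inl hiH⟩]
end

section
/- Let G₁, G₂ be unbounded labeled granularities such that ⊥ groups periodically into G₁ with period length P_{G₁} and into G₂ with period length P_{G₂}, let k ≠ 0 and l > 0 be integers, let G' = Select-down_k^l(G₁, G₂), and let P_{G'} = lcm(P_{G₁}, P_{G₂}). For each i ∈ L_{G₂} let A(i) = Δ_k^l({j ∈ L_{G₁} | ∅ ≠ G₁(j) ⊆ G₂(i)}). Then L̂_{G'}^{P_{G'}} = ⋃_{i ∈ L̂_{G₂}^{P_{G'}}} {a ∈ A(i) | a ∈ L̂_{G₁}^{P_{G'}}}. -/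
variable {T : Type*} [LinearOrder T]

theorem select_down_labels (B G₁ G₂ G' : Granularity T)
    (P₁ N₁ P₂ N₂ k l : ℤ)
    (hB : IsBottom B) (h₁u : Unbounded G₁) (h₂u : Unbounded G₂)
    (h₁ : GroupsPeriodicallyInto B G₁ P₁ N₁)
    (h₂ : GroupsPeriodicallyInto B G₂ P₂ N₂)
    (hk : k ≠ 0) (hl : 0 < l)
    (hlab : G'.labels = ⋃ i ∈ G₂.labels,
        Delta k l {j ∈ G₁.labels | (G₁.gran j).Nonempty ∧ G₁.gran j ⊆ G₂.gran i})
    (hgran : ∀ i ∈ G'.labels, G'.gran i = G₁.gran i) :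
    LHat B G' ((Int.lcm P₁ P₂ : ℤ)) =
      ⋃ i ∈ LHat B G₂ ((Int.lcm P₁ P₂ : ℤ)),
        {a ∈ Delta k l {j ∈ G₁.labels | (G₁.gran j).Nonempty ∧ G₁.gran j ⊆ G₂.gran i} |
          a ∈ LHat B G₁ ((Int.lcm P₁ P₂ : ℤ))} := by
  ext a
  simp only [Set.mem_iUnion, Set.mem_setOf_eq]
  constructor
  · rintro ⟨haL, n, hn1, hnP, hsub⟩
    have haL' := haL
    rw [hlab] at haL'
    simp only [Set.mem_iUnion] at haL'
    obtain ⟨i, hi, haD⟩ := haL'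
    rw [hgran a haL] at hsub
    obtain ⟨haG1, hne, hsub2⟩ := haD.1
    exact ⟨i, ⟨hi, n, hn1, hnP, hsub.trans hsub2⟩, haD,
      ⟨haG1, n, hn1, hnP, hsub⟩⟩
  · rintro ⟨i, ⟨hi, _⟩, haD, haG1, n, hn1, hnP, hsub⟩
    have haL : a ∈ G'.labels := by
      rw [hlab]
      simp only [Set.mem_iUnion]
      exact ⟨i, hi, haD⟩
    refine ⟨haL, n, hn1, hnP, ?_⟩
    rw [hgran a haL]
    exact hsub
end

section
/- Let G₁, G₂ be unbounded labeled granularities such that ⊥ groups periodically into G₁ with period length P_{G₁} and period label distance N_{G₁}, and ⊥ groups periodically into G₂ with period length P_{G₂}, and let G' = Select-up(G₁, G₂) be unbounded. Then ⊥ groups periodically into G' with period length P_{G'} = lcm(P_{G₁}, P_{G₂}) and period label distance N_{G'} = lcm(P_{G₁}, P_{G₂})·N_{G₁}/P_{G₁}. -/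
variable {T : Type*} [LinearOrder T]

/-! Periodicity of `⊥` into `G` iterates: for `t : ℕ`, `G (i + t * N)` is the union of the
`⊥`-granules of `G i` translated by `t * P` (a granule of an unbounded `G` is a finite union of
`⊥`-granules, so the definition applies). With `lcm P₁ P₂ = q₁ * P₁ = q₂ * P₂`, shifting `G₁` by
`q₁ * N₁` labels and `G₂` by `q₂ * N₂` labels translates the underlying `⊥`-granules by the
same amount; since distinct `⊥`-granules are disjoint, a containment `G₂ j ⊆ G₁ i` survives
the shift. So the labels of the select-up are stable under `+ q₁ * N₁`, and its granules,
being granules of `G₁`, repeat with period length `lcm P₁ P₂`. -/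

namespace Granularity

variable (G : Granularity T) {i j : ℤ} {x y : T}

theorem mem_labels_of_mem_gran_s13 (hx : x ∈ G.gran i) : i ∈ G.labels := by
  by_contra hi
  rw [G.empty_outside i hi] at hx
  exact hx

theorem lt_of_label_lt (hij : i < j) (hx : x ∈ G.gran i) (hy : y ∈ G.gran j) : x < y :=
  G.mono i (G.mem_labels_of_mem_gran_s13 hx) j (G.mem_labels_of_mem_gran_s13 hy) hij ⟨x, hx⟩ ⟨y, hy⟩
    x hx y hy

theorem label_le_of_lt (hx : x ∈ G.gran i) (hy : y ∈ G.gran j) (hxy : x < y) : i ≤ j :=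
  not_lt.1 fun hji => (G.lt_of_label_lt hji hy hx).asymm hxy

theorem label_eq_of_mem_gran (hi : x ∈ G.gran i) (hj : x ∈ G.gran j) : i = j :=
  le_antisymm (not_lt.1 fun hji => lt_irrefl x (G.lt_of_label_lt hji hj hi))
    (not_lt.1 fun hij => lt_irrefl x (G.lt_of_label_lt hij hi hj))

end Granularity

theorem Set.Finite.exists_eq_image_range {α : Type*} {S : Set α} (hS : S.Finite)
    (hne : S.Nonempty) : ∃ (k : ℕ) (j : ℕ → α), S = j '' ↑(Finset.range (k + 1)) := by
  obtain ⟨a, ha⟩ := hne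
  set l := hS.toFinset.toList
  have hl : 0 < l.length := List.length_pos_of_mem (by simpa [l] using ha)
  refine ⟨l.length - 1, fun r => l.getD r a, ?_⟩
  ext x
  simp only [Set.mem_image, Finset.coe_range, Set.mem_Iio, Nat.sub_add_cancel hl]
  rw [← hS.mem_toFinset, ← Finset.mem_toList, List.mem_iff_getElem]
  constructor
  · rintro ⟨r, hr, rfl⟩
    exact ⟨r, hr, List.getD_eq_getElem _ _ hr⟩
  · rintro ⟨r, hr, rfl⟩
    exact ⟨r, hr, (List.getD_eq_getElem _ _ hr).symm⟩

theorem exists_nat_mul_eq_of_dvd {a b : ℤ} (ha : 0 < a) (hb : 0 < b) (hab : a ∣ b) :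
    ∃ q : ℕ, 0 < q ∧ b = q * a := by
  obtain ⟨c, rfl⟩ := hab
  have hc : 0 < c := pos_of_mul_pos_right hb ha.le
  lift c to ℕ using hc.le
  exact ⟨c, by exact_mod_cast hc, mul_comm _ _⟩

section Bottom

variable {B H : Granularity T}

theorem exists_eq_of_gran_subset_biUnion (hB : ∀ n, (B.gran n).Nonempty) {ι : Type*}
    {s : Finset ι} {f : ι → ℤ} {n : ℤ} (h : B.gran n ⊆ ⋃ r ∈ s, B.gran (f r)) :
    ∃ r ∈ s, f r = n := by
  obtain ⟨x, hx⟩ := hB n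
  obtain ⟨r, hr, hxr⟩ := Set.mem_iUnion₂.1 (h hx)
  exact ⟨r, hr, B.label_eq_of_mem_gran hxr hx⟩

theorem GroupsInto.exists_mem_gran (hg : GroupsInto B H) {i : ℤ} {x : T} (hx : x ∈ H.gran i) :
    ∃ n, x ∈ B.gran n := by
  obtain ⟨S, -, hS⟩ := hg i (H.mem_labels_of_mem_gran_s13 hx) ⟨x, hx⟩
  rw [hS] at hx
  obtain ⟨n, -, hxn⟩ := Set.mem_iUnion₂.1 hx
  exact ⟨n, hxn⟩

theorem GroupsInto.of_gran_eq {H' : Granularity T} (hg : GroupsInto B H)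
    (hsub : H'.labels ⊆ H.labels) (hgran : ∀ i ∈ H'.labels, H'.gran i = H.gran i) :
    GroupsInto B H' := by
  intro i hi hne
  rw [hgran i hi] at hne ⊢
  exact hg i (hsub hi) hne

/-- The neighbours of `H i` bound the `⊥`-granules that make it up. -/
theorem Unbounded.finite_of_gran_eq_biUnion (hB : ∀ n, (B.gran n).Nonempty) (hu : Unbounded H)
    (hg : GroupsInto B H) {i : ℤ} (hi : i ∈ H.labels) {S : Set ℤ}
    (hS : H.gran i = ⋃ n ∈ S, B.gran n) : S.Finite := by
  obtain ⟨i₀, hi₀, hlt₀⟩ := hu.1 i hi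
  obtain ⟨i₁, hi₁, hlt₁⟩ := hu.2.1 i hi
  obtain ⟨x, hx⟩ := hu.2.2 i₀ hi₀
  obtain ⟨y, hy⟩ := hu.2.2 i₁ hi₁
  obtain ⟨m₀, hxm⟩ := hg.exists_mem_gran hx
  obtain ⟨m₁, hym⟩ := hg.exists_mem_gran hy
  refine (Set.finite_Icc m₀ m₁).subset fun n hn => ?_
  obtain ⟨t, ht⟩ := hB n
  have htH : t ∈ H.gran i := hS ▸ Set.mem_biUnion hn ht
  exact ⟨B.label_le_of_lt hxm ht (H.lt_of_label_lt hlt₀ hx htH),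
    B.label_le_of_lt ht hym (H.lt_of_label_lt hlt₁ htH hy)⟩

theorem GroupsInto.exists_biUnion_range_eq (hB : ∀ n, (B.gran n).Nonempty) (hu : Unbounded H)
    (hg : GroupsInto B H) {i : ℤ} (hi : i ∈ H.labels) :
    ∃ (k : ℕ) (j : ℕ → ℤ), (∀ r ≤ k, j r ∈ B.labels) ∧
      H.gran i = ⋃ r ∈ Finset.range (k + 1), B.gran (j r) := by
  obtain ⟨S, hSB, hS⟩ := hg i hi (hu.2.2 i hi)
  obtain ⟨n, hn, -⟩ := Set.nonempty_biUnion.1 (hS ▸ hu.2.2 i hi)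
  obtain ⟨k, j, rfl⟩ := (hu.finite_of_gran_eq_biUnion hB hg hi hS).exists_eq_image_range ⟨n, hn⟩
  refine ⟨k, j, fun r hr => hSB ⟨r, Finset.mem_range.2 (Nat.lt_succ_of_le hr), rfl⟩, ?_⟩
  rw [hS, Set.biUnion_image]
  rfl

end Bottom

namespace GroupsPeriodicallyInto

variable {B H : Granularity T} {P N : ℤ}

theorem add_mul_mem_labels (hp : GroupsPeriodicallyInto B H P N)
    (hmax : ∀ i ∈ H.labels, ∃ j ∈ H.labels, i < j) {i : ℤ} (hi : i ∈ H.labels) (t : ℕ) :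
    i + t * N ∈ H.labels := by
  induction t with
  | zero => simpa using hi
  | succ t ih =>
    rw [Nat.cast_succ, add_one_mul, ← add_assoc]
    obtain h | ⟨g, hg, -⟩ := hp.2.2.2.1 _ ih
    · exact h
    · obtain ⟨j, hj, hgj⟩ := hmax g hg.1
      exact absurd (hg.2 hj) (not_le.2 hgj)

theorem gran_add_mul (hp : GroupsPeriodicallyInto B H P N) (hu : Unbounded H) {i : ℤ} {k : ℕ}
    {j : ℕ → ℤ} (hi : i ∈ H.labels) (hj : ∀ r ≤ k, j r ∈ B.labels)
    (hd : H.gran i = ⋃ r ∈ Finset.range (k + 1), B.gran (j r)) (t : ℕ) :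
    (∀ r ≤ k, j r + t * P ∈ B.labels) ∧
      H.gran (i + t * N) = ⋃ r ∈ Finset.range (k + 1), B.gran (j r + t * P) := by
  induction t with
  | zero =>
    simp only [Nat.cast_zero, zero_mul, add_zero]
    exact ⟨hj, hd⟩
  | succ t ih =>
    have hit := hp.add_mul_mem_labels hu.2.1 hi t
    have hit' := hp.add_mul_mem_labels hu.2.1 hi (t + 1)
    simp only [Nat.cast_succ, add_one_mul, ← add_assoc] at hit' ⊢
    exact hp.2.2.2.2.1 _ hit k _ ih.1 ih.2 hit' (hu.2.2 _ hit')

theorem gran_add_mul_subset {H₁ H₂ : Granularity T} {P₁ N₁ P₂ N₂ : ℤ}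
    (hB : ∀ n, (B.gran n).Nonempty) (h₁ : GroupsPeriodicallyInto B H₁ P₁ N₁)
    (h₂ : GroupsPeriodicallyInto B H₂ P₂ N₂) (hu₁ : Unbounded H₁) (hu₂ : Unbounded H₂)
    {t₁ t₂ : ℕ} (ht : t₁ * P₁ = t₂ * P₂) {i j : ℤ} (hi : i ∈ H₁.labels) (hj : j ∈ H₂.labels)
    (hji : H₂.gran j ⊆ H₁.gran i) : H₂.gran (j + t₂ * N₂) ⊆ H₁.gran (i + t₁ * N₁) := by
  obtain ⟨k₁, a, ha, hda⟩ := h₁.1.exists_biUnion_range_eq hB hu₁ hi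
  obtain ⟨k₂, b, hb, hdb⟩ := h₂.1.exists_biUnion_range_eq hB hu₂ hj
  rw [(h₁.gran_add_mul hu₁ hi ha hda t₁).2, (h₂.gran_add_mul hu₂ hj hb hdb t₂).2, ht]
  refine Set.iUnion₂_subset fun r hr => ?_
  have hbr : B.gran (b r) ⊆ ⋃ s ∈ Finset.range (k₁ + 1), B.gran (a s) :=
    hda ▸ (hdb ▸ Set.subset_biUnion_of_mem (u := fun r => B.gran (b r)) hr).trans hji
  obtain ⟨s, hs, hsr⟩ := exists_eq_of_gran_subset_biUnion hB hbr
  rw [← hsr]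
  exact Set.subset_biUnion_of_mem (u := fun s => B.gran (a s + t₂ * P₂)) hs

end GroupsPeriodicallyInto

theorem select_up_periodicity_general (B G₁ G₂ G' : Granularity T)
    (P₁ N₁ P₂ N₂ : ℤ)
    (hB : IsBottom B) (h₁u : Unbounded G₁) (h₂u : Unbounded G₂)
    (h₁ : GroupsPeriodicallyInto B G₁ P₁ N₁)
    (h₂ : GroupsPeriodicallyInto B G₂ P₂ N₂)
    (hlab : G'.labels = {i ∈ G₁.labels |
        ∃ j ∈ G₂.labels, (G₂.gran j).Nonempty ∧ G₂.gran j ⊆ G₁.gran i})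
    (hgran : ∀ i ∈ G'.labels, G'.gran i = G₁.gran i) :
    GroupsPeriodicallyInto B G' ((Int.lcm P₁ P₂ : ℤ))
      ((Int.lcm P₁ P₂ : ℤ) * N₁ / P₁) := by
  have hL : (0 : ℤ) < Int.lcm P₁ P₂ := by exact_mod_cast Int.lcm_pos h₁.2.1.ne' h₂.2.1.ne'
  obtain ⟨q₁, hq₁, hL₁⟩ := exists_nat_mul_eq_of_dvd h₁.2.1 hL (Int.dvd_lcm_left P₁ P₂)
  obtain ⟨q₂, -, hL₂⟩ := exists_nat_mul_eq_of_dvd h₂.2.1 hL (Int.dvd_lcm_right P₁ P₂)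
  have hN : (Int.lcm P₁ P₂ : ℤ) * N₁ / P₁ = q₁ * N₁ := by
    rw [hL₁, mul_right_comm, Int.mul_ediv_cancel _ h₁.2.1.ne']
  have hsub : G'.labels ⊆ G₁.labels := hlab ▸ fun i hi => hi.1
  have hshift : ∀ i ∈ G'.labels, i + q₁ * N₁ ∈ G'.labels := by
    intro i hi
    rw [hlab] at hi ⊢
    obtain ⟨hi₁, j, hj, -, hji⟩ := hi
    have hj' := h₂.add_mul_mem_labels h₂u.2.1 hj q₂
    exact ⟨h₁.add_mul_mem_labels h₁u.2.1 hi₁ q₁, j + q₂ * N₂, hj', h₂u.2.2 _ hj',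
      h₁.gran_add_mul_subset hB.2 h₂ h₁u h₂u (hL₁.symm.trans hL₂) hi₁ hj hji⟩
  rw [hN]
  refine ⟨h₁.1.of_gran_eq hsub hgran, hL, mul_pos (by exact_mod_cast hq₁) h₁.2.2.1,
    fun i hi => .inl (hshift i hi), ?_, ?_⟩
  · intro i hi k j hj hd hiN _
    rw [hgran i hi] at hd
    rw [hgran _ hiN, hL₁]
    exact h₁.gran_add_mul h₁u (hsub hi) hj hd q₁
  · rintro s ⟨⟨hs, -⟩, -⟩
    have hs' := hshift s hs
    exact ⟨hs', hgran _ hs' ▸ h₁u.2.2 _ (hsub hs')⟩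

theorem select_up_periodicity (B G₁ G₂ G' : Granularity T)
    (P₁ N₁ P₂ N₂ : ℤ)
    (hB : IsBottom B) (h₁u : Unbounded G₁) (h₂u : Unbounded G₂) (hG'u : Unbounded G')
    (h₁ : GroupsPeriodicallyInto B G₁ P₁ N₁)
    (h₂ : GroupsPeriodicallyInto B G₂ P₂ N₂)
    (hlab : G'.labels = {i ∈ G₁.labels |
        ∃ j ∈ G₂.labels, (G₂.gran j).Nonempty ∧ G₂.gran j ⊆ G₁.gran i})
    (hgran : ∀ i ∈ G'.labels, G'.gran i = G₁.gran i) :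
    GroupsPeriodicallyInto B G' ((Int.lcm P₁ P₂ : ℤ))
      ((Int.lcm P₁ P₂ : ℤ) * N₁ / P₁) :=
  select_up_periodicity_general B G₁ G₂ G' P₁ N₁ P₂ N₂ hB h₁u h₂u h₁ h₂ hlab hgran
end
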